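/- arXiv:1708.09692 — 7 statements merged into one kernel-verified Lean document; each statement's English description precedes it below -/
import Mathlib

section
/- Suppose that sequences of measurable parameter sets A_n, B_n, C_n ∈ B_{Θ_n} and positive constants a_n, b_n, c_n satisfy conditions (A1), (A2), (A3) and (A4), with lim_n b_n = lim_n c_n = 0, and set r_n := (b_n + c_n)/a_n (assumed finitely defined). Then for every δ > 0, limsup_{n→∞} P( π_n^{post}(A_n^c | X_n) > r_n/δ ) ≤ δ. -/
/-!
On the event where the posterior mass of `Aₙᶜ` exceeds `rₙ/δ`, the ratio `mₙ/gⁿ` is at least `aₙ`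
and `Xₙ ∉ Sₙ`, the density `gⁿ(x)` is at most `δ / ((bₙ + cₙ) Mₙ)` times
`∫_{Aₙᶜ} exp qₙ(x|θ) πₙ(dθ)`. Integrating over `Sₙᶜ` and exchanging the integrals, (A1)–(A3)
bound the right-hand side by `(bₙ + cₙ) Mₙ`, so this event has probability at most `δ`. What is
left of the posterior event lies in the complement of the (A4) event or in `{Xₙ ∈ Sₙ}`, whose
probabilities tend to zero.
-/

open MeasureTheory ENNReal Filter

noncomputable section

variable {χ Θ : ℕ → Type*} [∀ n, MeasurableSpace (χ n)] [∀ n, MeasurableSpace (Θ n)]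

/-- `Q_n(S|θ) = ∫_S exp(q_n(x|θ)) λ^n(dx)`. -/
def Qfun (lam : ∀ n, Measure (χ n)) (q : ∀ n, χ n → Θ n → ℝ) (n : ℕ)
    (S : Set (χ n)) (θ : Θ n) : ℝ≥0∞ :=
  ∫⁻ x in S, ENNReal.ofReal (Real.exp (q n x θ)) ∂(lam n)

/-- `M_n(S, A) = ∫_A Q_n(S|θ) π_n(dθ)`. -/
def Mfun (lam : ∀ n, Measure (χ n)) (prior : ∀ n, Measure (Θ n))
    (q : ∀ n, χ n → Θ n → ℝ) (n : ℕ) (S : Set (χ n)) (A : Set (Θ n)) : ℝ≥0∞ :=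
  ∫⁻ θ in A, Qfun lam q n S θ ∂(prior n)

/-- The `R^(α)`-posterior probability of `A` given `x`. -/
def rpost (prior : ∀ n, Measure (Θ n)) (q : ∀ n, χ n → Θ n → ℝ) (n : ℕ)
    (A : Set (Θ n)) (x : χ n) : ℝ≥0∞ :=
  (∫⁻ θ in A, ENNReal.ofReal (Real.exp (q n x θ)) ∂(prior n)) /
    (∫⁻ θ, ENNReal.ofReal (Real.exp (q n x θ)) ∂(prior n))

/-- The `R^(α)`-marginal density `m_n(x)`. -/
def rmarg (lam : ∀ n, Measure (χ n)) (prior : ∀ n, Measure (Θ n))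
    (q : ∀ n, χ n → Θ n → ℝ) (n : ℕ) (x : χ n) : ℝ≥0∞ :=
  (∫⁻ θ, ENNReal.ofReal (Real.exp (q n x θ)) ∂(prior n)) /
    Mfun lam prior q n Set.univ Set.univ

namespace ENNReal

lemma le_mul_of_div_le_of_le {a b c : ℝ≥0∞} (h : a / b ≤ c) (hab : a ≤ b) (hc : c ≠ 0) :
    a ≤ c * b := by
  rcases eq_or_ne b 0 with rfl | hb
  · simpa using hab
  · exact (ENNReal.div_le_iff_le_mul (Or.inl hb) (Or.inr hc)).1 h

lemma mul_mul_mul_le_of_le_div_of_le_div {r s u v M w : ℝ≥0∞} (hr : r ≤ u / v)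
    (hs : s ≤ v / M / w) : r * s * M * w ≤ u :=
  calc r * s * M * w = r * (M * (w * s)) := by ring
    _ ≤ r * (M * (v / M)) := by
        gcongr
        exact (mul_le_mul_right hs w).trans ENNReal.mul_div_le
    _ ≤ u / v * v := mul_le_mul' hr ENNReal.mul_div_le
    _ ≤ u := by rw [mul_comm]; exact ENNReal.mul_div_le

end ENNReal

section

variable {Ω E T : Type*} [MeasurableSpace Ω] [MeasurableSpace E] [MeasurableSpace T]

lemma Filter.limsup_le_of_le_add_of_tendsto_zero {ι : Type*} {l : Filter ι} [l.NeBot]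
    {u v : ι → ℝ≥0∞} {c : ℝ≥0∞} (h : ∀ i, u i ≤ c + v i) (hv : Tendsto v l (nhds 0)) :
    limsup u l ≤ c := by
  have hcv : Tendsto (fun i => c + v i) l (nhds c) := by
    simpa using tendsto_const_nhds.add hv
  exact (limsup_le_limsup (Eventually.of_forall h)).trans hcv.limsup_eq.le

lemma MeasureTheory.tendsto_measure_compl_of_tendsto_one {ι : Type*} {l : Filter ι}
    {μ : Measure Ω} [IsProbabilityMeasure μ] {s : ι → Set Ω} (hs : ∀ i, MeasurableSet (s i))
    (h : Tendsto (fun i => μ (s i)) l (nhds 1)) : Tendsto (fun i => μ (s i)ᶜ) l (nhds 0) := by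
  simp_rw [prob_compl_eq_one_sub (hs _)]
  simpa [Function.comp_def] using ((ENNReal.continuous_sub_left one_ne_top).tendsto 1).comp h

lemma MeasureTheory.measure_le_add_of_and_and_not (μ : Measure Ω) (p q r : Ω → Prop) :
    μ {ω | p ω} ≤ μ {ω | p ω ∧ q ω ∧ ¬ r ω} + (μ {ω | q ω}ᶜ + μ {ω | r ω}) := by
  calc μ {ω | p ω} ≤ μ ({ω | p ω ∧ q ω ∧ ¬ r ω} ∪ ({ω | q ω}ᶜ ∪ {ω | r ω})) :=
        measure_mono fun ω hp => by by_cases hq : q ω <;> by_cases hr : r ω <;> simp_all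
    _ ≤ _ := (measure_union_le _ _).trans (by gcongr; exact measure_union_le _ _)

lemma MeasureTheory.mul_withDensity_le_setLIntegral {μ : Measure E} [SFinite μ]
    {g F : E → ℝ≥0∞} (hF : Measurable F) {s : Set E} {K : ℝ≥0∞}
    (h : ∀ x ∈ s, K * g x ≤ F x) : K * μ.withDensity g s ≤ ∫⁻ x in s, F x ∂μ := by
  rw [withDensity_apply']
  exact (lintegral_const_mul_le K g).trans (setLIntegral_mono hF h)

variable {μ : Measure E} {π : Measure T} [SFinite μ] [SFinite π] {f : E → T → ℝ≥0∞}

lemma lintegral_setLIntegral_compl_le (hf : Measurable (Function.uncurry f))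
    {A B C : Set T} {S : Set E} {b c : ℝ≥0∞} (hcover : Aᶜ ⊆ B ∪ C)
    (hB : ∫⁻ θ in B, ∫⁻ x, f x θ ∂μ ∂π ≤ b * ∫⁻ θ, ∫⁻ x, f x θ ∂μ ∂π)
    (hC : ∀ θ ∈ C, ∫⁻ x in Sᶜ, f x θ ∂μ ≤ c * ∫⁻ x, f x θ ∂μ) :
    ∫⁻ x in Sᶜ, ∫⁻ θ in Aᶜ, f x θ ∂π ∂μ ≤ (b + c) * ∫⁻ θ, ∫⁻ x, f x θ ∂μ ∂π := by
  have hQ : Measurable fun θ => ∫⁻ x, f x θ ∂μ := hf.lintegral_prod_left'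
  calc ∫⁻ x in Sᶜ, ∫⁻ θ in Aᶜ, f x θ ∂π ∂μ = ∫⁻ θ in Aᶜ, ∫⁻ x in Sᶜ, f x θ ∂μ ∂π :=
        lintegral_lintegral_swap hf.aemeasurable
    _ ≤ ∫⁻ θ in B ∪ C, ∫⁻ x in Sᶜ, f x θ ∂μ ∂π := lintegral_mono_set hcover
    _ ≤ (∫⁻ θ in B, ∫⁻ x in Sᶜ, f x θ ∂μ ∂π) + ∫⁻ θ in C, ∫⁻ x in Sᶜ, f x θ ∂μ ∂π :=
        lintegral_union_le _ _ _
    _ ≤ (∫⁻ θ in B, ∫⁻ x, f x θ ∂μ ∂π) + ∫⁻ θ in C, c * ∫⁻ x, f x θ ∂μ ∂π :=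
        add_le_add (lintegral_mono fun θ => setLIntegral_le_lintegral _ _)
          (setLIntegral_mono (hQ.const_mul c) hC)
    _ ≤ b * (∫⁻ θ, ∫⁻ x, f x θ ∂μ ∂π) + c * ∫⁻ θ, ∫⁻ x, f x θ ∂μ ∂π := by
        rw [lintegral_const_mul c hQ]
        gcongr
        exact Measure.restrict_le_self
    _ = (b + c) * ∫⁻ θ, ∫⁻ x, f x θ ∂μ ∂π := (add_mul _ _ _).symm

lemma measure_posterior_gt_le {P : Measure Ω} {Y : Ω → E} (hY : Measurable Y) {g : E → ℝ≥0∞}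
    (hlaw : P.map Y = μ.withDensity g) (hf : Measurable (Function.uncurry f)) {A : Set T}
    {S : Set E} {M : ℝ≥0∞} (hM0 : M ≠ 0) (hMtop : M ≠ ⊤) {a ε δ : ℝ} (ha : 0 < a)
    (hε : 0 < ε) (hδ : 0 < δ)
    (hmass : ∫⁻ x in Sᶜ, ∫⁻ θ in Aᶜ, f x θ ∂π ∂μ ≤ ENNReal.ofReal ε * M) :
    P {ω | ENNReal.ofReal (ε / a / δ) <
          (∫⁻ θ in Aᶜ, f (Y ω) θ ∂π) / ∫⁻ θ, f (Y ω) θ ∂π ∧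
        ENNReal.ofReal a ≤ (∫⁻ θ, f (Y ω) θ ∂π) / M / g (Y ω) ∧ Y ω ∉ S} ≤
      ENNReal.ofReal δ := by
  set U := {x | ENNReal.ofReal (ε / a / δ) < (∫⁻ θ in Aᶜ, f x θ ∂π) / ∫⁻ θ, f x θ ∂π ∧
    ENNReal.ofReal a ≤ (∫⁻ θ, f x θ ∂π) / M / g x ∧ x ∉ S}
  set K := ENNReal.ofReal (ε / δ) * M
  have hK : ENNReal.ofReal (ε / a / δ) * ENNReal.ofReal a * M = K := by
    rw [← ENNReal.ofReal_mul (by positivity)]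
    congr 2
    field_simp
  have hpoint : ∀ x ∈ U, K * g x ≤ ∫⁻ θ in Aᶜ, f x θ ∂π := fun x ⟨hpost, hmarg, _⟩ =>
    hK ▸ ENNReal.mul_mul_mul_le_of_le_div_of_le_div hpost.le hmarg
  have hbound : K * P (Y ⁻¹' U) ≤ ENNReal.ofReal ε * M :=
    calc K * P (Y ⁻¹' U) ≤ K * μ.withDensity g U := by
          rw [← hlaw]; gcongr; exact Measure.le_map_apply hY.aemeasurable _
      _ ≤ ∫⁻ x in U, ∫⁻ θ in Aᶜ, f x θ ∂π ∂μ :=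
          mul_withDensity_le_setLIntegral hf.lintegral_prod_right' hpoint
      _ ≤ ∫⁻ x in Sᶜ, ∫⁻ θ in Aᶜ, f x θ ∂π ∂μ := lintegral_mono_set fun x hx => hx.2.2
      _ ≤ _ := hmass
  rwa [show ENNReal.ofReal ε * M = K * ENNReal.ofReal δ by
      rw [mul_right_comm, ← ENNReal.ofReal_mul (by positivity), div_mul_cancel₀ _ hδ.ne'],
    ENNReal.mul_le_mul_iff_right (by positivity) (by finiteness)] at hbound

end

theorem stmt_0_general
    {Ω : Type*} [MeasurableSpace Ω] (P : Measure Ω) [IsProbabilityMeasure P]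
    {χ Θ : ℕ → Type*} [∀ n, MeasurableSpace (χ n)] [∀ n, MeasurableSpace (Θ n)]
    (lam : ∀ n, Measure (χ n)) [∀ n, SigmaFinite (lam n)]
    (X : ∀ n, Ω → χ n) (hX : ∀ n, Measurable (X n))
    (g : ∀ n, χ n → ℝ≥0∞) (hgmeas : ∀ n, Measurable (g n))
    (hlaw : ∀ n, P.map (X n) = (lam n).withDensity (g n))
    (prior : ∀ n, Measure (Θ n)) (hprior : ∀ n, prior n Set.univ ≤ 1)
    (q : ∀ n, χ n → Θ n → ℝ)
    (hq : ∀ n, Measurable (fun z : χ n × Θ n => q n z.1 z.2))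
    (hM : ∀ n, 0 < Mfun lam prior q n Set.univ Set.univ
      ∧ Mfun lam prior q n Set.univ Set.univ < ⊤)
    (A B C : ∀ n, Set (Θ n))
    (a b c : ℕ → ℝ) (ha : ∀ n, 0 < a n) (hb : ∀ n, 0 < b n) (hc : ∀ n, 0 < c n)
    -- (A1)
    (hA1 : ∀ n, A n ∪ B n ∪ C n = Set.univ)
    -- (A2)
    (hA2 : ∀ n, Mfun lam prior q n Set.univ (B n) / Mfun lam prior q n Set.univ Set.univ
      ≤ ENNReal.ofReal (b n))
    -- (A3)
    (hA3 : ∃ S : ∀ n, Set (χ n), (∀ n, MeasurableSet (S n)) ∧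
      Tendsto (fun n => P.map (X n) (S n)) atTop (nhds 0) ∧
      ∀ n, ∀ θ ∈ C n, Qfun lam q n (S n)ᶜ θ / Qfun lam q n Set.univ θ ≤ ENNReal.ofReal (c n))
    -- (A4)
    (hA4 : Tendsto (fun n => P {ω | ENNReal.ofReal (a n) ≤
        rmarg lam prior q n (X n ω) / g n (X n ω)}) atTop (nhds 1)) :
    ∀ δ : ℝ, 0 < δ →
      Filter.limsup (fun n => P {ω |
        ENNReal.ofReal ((b n + c n) / a n / δ) < rpost prior q n (A n)ᶜ (X n ω)}) atTop
        ≤ ENNReal.ofReal δ := by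
  intro δ hδ
  obtain ⟨S, -, hSto, hSC⟩ := hA3
  have (n : ℕ) : IsFiniteMeasure (prior n) := ⟨(hprior n).trans_lt one_lt_top⟩
  have hf (n : ℕ) :
      Measurable (Function.uncurry fun x θ => ENNReal.ofReal (Real.exp (q n x θ))) :=
    ENNReal.measurable_ofReal.comp (Real.measurable_exp.comp (hq n))
  have hgood (n : ℕ) : P {ω | ENNReal.ofReal ((b n + c n) / a n / δ) <
      rpost prior q n (A n)ᶜ (X n ω) ∧ ENNReal.ofReal (a n) ≤
      rmarg lam prior q n (X n ω) / g n (X n ω) ∧ X n ω ∉ S n} ≤ ENNReal.ofReal δ := by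
    refine measure_posterior_gt_le (hX n) (hlaw n) (hf n) (hM n).1.ne' (hM n).2.ne (ha n)
      (add_pos (hb n) (hc n)) hδ ?_
    have hcover : (A n)ᶜ ⊆ B n ∪ C n :=
      Set.compl_subset_iff_union.2 ((Set.union_assoc _ _ _).symm.trans (hA1 n))
    simp only [Mfun, Qfun, Measure.restrict_univ] at hM hA2 hSC ⊢
    rw [ENNReal.ofReal_add (hb n).le (hc n).le]
    exact lintegral_setLIntegral_compl_le (hf n) hcover
      ((ENNReal.div_le_iff (hM n).1.ne' (hM n).2.ne).1 (hA2 n))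
      fun θ hθ => ENNReal.le_mul_of_div_le_of_le (hSC n θ hθ) (setLIntegral_le_lintegral _ _)
        (ENNReal.ofReal_pos.2 (hc n)).ne'
  have hmarg (n : ℕ) : MeasurableSet
      {ω | ENNReal.ofReal (a n) ≤ rmarg lam prior q n (X n ω) / g n (X n ω)} :=
    hX n (measurableSet_le measurable_const
      (((hf n).lintegral_prod_right'.div_const _).div (hgmeas n)))
  refine limsup_le_of_le_add_of_tendsto_zero (fun n => ?_)
    (by simpa using (tendsto_measure_compl_of_tendsto_one hmarg hA4).add hSto)
  exact (measure_le_add_of_and_and_not P _ _ (fun ω => X n ω ∈ S n)).trans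
    (add_le_add (hgood n) (add_le_add_right (Measure.le_map_apply (hX n).aemeasurable _) _))

/-- Lemma: sufficiency part of exponential consistency of the
`R^(α)`-posterior, convergence in probability form. -/
theorem stmt_0
    {Ω : Type*} [MeasurableSpace Ω] (P : Measure Ω) [IsProbabilityMeasure P]
    {χ Θ : ℕ → Type*} [∀ n, MeasurableSpace (χ n)] [∀ n, MeasurableSpace (Θ n)]
    (lam : ∀ n, Measure (χ n)) [∀ n, SigmaFinite (lam n)]
    (X : ∀ n, Ω → χ n) (hX : ∀ n, Measurable (X n))
    (g : ∀ n, χ n → ℝ≥0∞) (hgmeas : ∀ n, Measurable (g n))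
    (hlaw : ∀ n, P.map (X n) = (lam n).withDensity (g n))
    (prior : ∀ n, Measure (Θ n)) (hprior : ∀ n, prior n Set.univ ≤ 1)
    (q : ∀ n, χ n → Θ n → ℝ)
    (hq : ∀ n, Measurable (fun z : χ n × Θ n => q n z.1 z.2))
    (hM : ∀ n, 0 < Mfun lam prior q n Set.univ Set.univ
      ∧ Mfun lam prior q n Set.univ Set.univ < ⊤)
    (A B C : ∀ n, Set (Θ n))
    (hAmeas : ∀ n, MeasurableSet (A n)) (hBmeas : ∀ n, MeasurableSet (B n))
    (hCmeas : ∀ n, MeasurableSet (C n))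
    (a b c : ℕ → ℝ) (ha : ∀ n, 0 < a n) (hb : ∀ n, 0 < b n) (hc : ∀ n, 0 < c n)
    (hbto : Tendsto b atTop (nhds 0)) (hcto : Tendsto c atTop (nhds 0))
    -- (A1)
    (hA1 : ∀ n, A n ∪ B n ∪ C n = Set.univ)
    -- (A2)
    (hA2 : ∀ n, Mfun lam prior q n Set.univ (B n) / Mfun lam prior q n Set.univ Set.univ
      ≤ ENNReal.ofReal (b n))
    -- (A3)
    (hA3 : ∃ S : ∀ n, Set (χ n), (∀ n, MeasurableSet (S n)) ∧
      Tendsto (fun n => P.map (X n) (S n)) atTop (nhds 0) ∧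
      ∀ n, ∀ θ ∈ C n, Qfun lam q n (S n)ᶜ θ / Qfun lam q n Set.univ θ ≤ ENNReal.ofReal (c n))
    -- (A4)
    (hA4 : Tendsto (fun n => P {ω | ENNReal.ofReal (a n) ≤
        rmarg lam prior q n (X n ω) / g n (X n ω)}) atTop (nhds 1)) :
    ∀ δ : ℝ, 0 < δ →
      Filter.limsup (fun n => P {ω |
        ENNReal.ofReal ((b n + c n) / a n / δ) < rpost prior q n (A n)ᶜ (X n ω)}) atTop
        ≤ ENNReal.ofReal δ :=
  stmt_0_general P lam X hX g hgmeas hlaw prior hprior q hq hM A B C a b c ha hb hc hA1 hA2 hA3 hA4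
end
end

section
/- Suppose that sequences of measurable parameter sets A_n, B_n, C_n ∈ B_{Θ_n} and positive constants a_n, b_n, c_n satisfy conditions (A1), (A2), (A3)* and (A4)*, with lim_n b_n = lim_n c_n = 0, and set r_n := (b_n + c_n)/a_n (assumed finitely defined). Then for any summable sequence of positive numbers δ_n, P( π_n^{post}(A_n^c | X_n) > r_n/δ_n infinitely often ) = 0. -/
open MeasureTheory ENNReal Filter

noncomputable section

variable {χ Θ : ℕ → Type*} [∀ n, MeasurableSpace (χ n)] [∀ n, MeasurableSpace (Θ n)]

/-! Let `T_n` be the set of `x ∉ S_n` with `m_n(x)/g^n(x) ≥ a_n` and posterior mass of `A_nᶜ`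
above `r_n`. On `T_n` the density is dominated:
`r_n a_n M_n g^n(x) ≤ ∫_{A_nᶜ} e^{q_n(x|θ)} π_n(dθ)`. Integrating over `T_n` and exchanging the
integrals gives `r_n a_n M_n P(X_n ∈ T_n) ≤ M_n(S_nᶜ, A_nᶜ)`, and
`M_n(S_nᶜ, A_nᶜ) ≤ M_n(χ_n, B_n) + M_n(S_nᶜ, C_n) ≤ (b_n + c_n) M_n`, i.e. `P(X_n ∈ T_n) ≤ δ_n`.
By Borel–Cantelli `X_n ∈ T_n` happens only finitely often, and by (A3)* and (A4)* so do the
other two ways the posterior of `A_nᶜ` can exceed `r_n`. -/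

section Bounds

variable {lam : ∀ n, Measure (χ n)} {prior : ∀ n, Measure (Θ n)} {q : ∀ n, χ n → Θ n → ℝ}
  {n : ℕ}

theorem Mfun_mono_left {S S' : Set (χ n)} (h : S ⊆ S') (A : Set (Θ n)) :
    Mfun lam prior q n S A ≤ Mfun lam prior q n S' A :=
  lintegral_mono fun _ => lintegral_mono_set h

theorem Mfun_mono_right (S : Set (χ n)) {A A' : Set (Θ n)} (h : A ⊆ A') :
    Mfun lam prior q n S A ≤ Mfun lam prior q n S A' :=
  lintegral_mono_set h

theorem Mfun_union_le (S : Set (χ n)) (A A' : Set (Θ n)) :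
    Mfun lam prior q n S (A ∪ A') ≤ Mfun lam prior q n S A + Mfun lam prior q n S A' :=
  lintegral_union_le _ _ _

theorem measurable_ofReal_exp (hq : Measurable fun z : χ n × Θ n => q n z.1 z.2) :
    Measurable fun z : χ n × Θ n => ENNReal.ofReal (Real.exp (q n z.1 z.2)) :=
  (Real.measurable_exp.comp hq).ennreal_ofReal

theorem measurable_Qfun [SFinite (lam n)] (hq : Measurable fun z : χ n × Θ n => q n z.1 z.2)
    (S : Set (χ n)) : Measurable (Qfun lam q n S) :=
  (measurable_ofReal_exp hq).lintegral_prod_left'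

theorem Mfun_eq_setLIntegral_setLIntegral [SFinite (lam n)] [SFinite (prior n)]
    (hq : Measurable fun z : χ n × Θ n => q n z.1 z.2) (S : Set (χ n)) (A : Set (Θ n)) :
    Mfun lam prior q n S A =
      ∫⁻ x in S, ∫⁻ θ in A, ENNReal.ofReal (Real.exp (q n x θ)) ∂prior n ∂lam n :=
  (lintegral_lintegral_swap (measurable_ofReal_exp hq).aemeasurable).symm

theorem Mfun_le_mul_of_Qfun_div_le [SFinite (lam n)]
    (hq : Measurable fun z : χ n × Θ n => q n z.1 z.2) {S : Set (χ n)} {C : Set (Θ n)}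
    {c : ℝ≥0∞} (hc0 : c ≠ 0) (hctop : c ≠ ⊤)
    (hC : ∀ θ ∈ C, Qfun lam q n S θ / Qfun lam q n Set.univ θ ≤ c) :
    Mfun lam prior q n S C ≤ c * Mfun lam prior q n Set.univ Set.univ :=
  calc Mfun lam prior q n S C
      ≤ ∫⁻ θ in C, c * Qfun lam q n Set.univ θ ∂prior n :=
        setLIntegral_mono ((measurable_Qfun hq _).const_mul c) fun θ hθ =>
          (ENNReal.div_le_iff_le_mul (Or.inr hctop) (Or.inr hc0)).1 (hC θ hθ)
    _ = c * Mfun lam prior q n Set.univ C := lintegral_const_mul c (measurable_Qfun hq _)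
    _ ≤ c * Mfun lam prior q n Set.univ Set.univ := by
        gcongr
        exact Mfun_mono_right _ (Set.subset_univ C)

theorem Mfun_compl_le_add_mul [SFinite (lam n)]
    (hq : Measurable fun z : χ n × Θ n => q n z.1 z.2)
    (hM0 : Mfun lam prior q n Set.univ Set.univ ≠ 0)
    (hMtop : Mfun lam prior q n Set.univ Set.univ ≠ ⊤)
    {A B C : Set (Θ n)} (hABC : A ∪ B ∪ C = Set.univ) {S : Set (χ n)} {b c : ℝ≥0∞}
    (hB : Mfun lam prior q n Set.univ B / Mfun lam prior q n Set.univ Set.univ ≤ b)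
    (hc0 : c ≠ 0) (hctop : c ≠ ⊤)
    (hC : ∀ θ ∈ C, Qfun lam q n S θ / Qfun lam q n Set.univ θ ≤ c) :
    Mfun lam prior q n S Aᶜ ≤ (b + c) * Mfun lam prior q n Set.univ Set.univ := by
  have hAc : Aᶜ ⊆ B ∪ C := Set.compl_subset_iff_union.2 (by rw [← Set.union_assoc, hABC])
  calc Mfun lam prior q n S Aᶜ
      ≤ Mfun lam prior q n S B + Mfun lam prior q n S C :=
        (Mfun_mono_right S hAc).trans (Mfun_union_le S B C)
    _ ≤ b * Mfun lam prior q n Set.univ Set.univ + c * Mfun lam prior q n Set.univ Set.univ :=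
        add_le_add ((Mfun_mono_left (Set.subset_univ S) B).trans
            ((ENNReal.div_le_iff hM0 hMtop).1 hB))
          (Mfun_le_mul_of_Qfun_div_le hq hc0 hctop hC)
    _ = (b + c) * Mfun lam prior q n Set.univ Set.univ := (add_mul b c _).symm

theorem mul_le_setLIntegral_of_le_rmarg_div_of_le_rpost {A : Set (Θ n)} {x : χ n}
    {y a r : ℝ≥0∞} (ha : a ≤ rmarg lam prior q n x / y) (hr : r ≤ rpost prior q n A x) :
    r * a * Mfun lam prior q n Set.univ Set.univ * y ≤
      ∫⁻ θ in A, ENNReal.ofReal (Real.exp (q n x θ)) ∂prior n := by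
  have hy : a * y * Mfun lam prior q n Set.univ Set.univ ≤
      ∫⁻ θ, ENNReal.ofReal (Real.exp (q n x θ)) ∂prior n :=
    ENNReal.mul_le_of_le_div (ENNReal.mul_le_of_le_div ha)
  calc r * a * Mfun lam prior q n Set.univ Set.univ * y
      = r * (a * y * Mfun lam prior q n Set.univ Set.univ) := by ring
    _ ≤ r * ∫⁻ θ, ENNReal.ofReal (Real.exp (q n x θ)) ∂prior n := by gcongr
    _ ≤ _ := ENNReal.mul_le_of_le_div hr

theorem mul_measure_preimage_le_Mfun [SFinite (lam n)] [SFinite (prior n)]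
    {Ω : Type*} [MeasurableSpace Ω] {P : Measure Ω} {X : Ω → χ n} (hX : Measurable X)
    {g : χ n → ℝ≥0∞} (hlaw : P.map X = (lam n).withDensity g)
    (hq : Measurable fun z : χ n × Θ n => q n z.1 z.2) {A : Set (Θ n)} {T : Set (χ n)}
    {a r : ℝ≥0∞} (hT : ∀ x ∈ T, a ≤ rmarg lam prior q n x / g x ∧ r ≤ rpost prior q n A x) :
    r * a * Mfun lam prior q n Set.univ Set.univ * P (X ⁻¹' T) ≤ Mfun lam prior q n T A := by
  have hPT : P (X ⁻¹' T) ≤ ∫⁻ x in T, g x ∂lam n := by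
    simpa only [hlaw, withDensity_apply'] using Measure.le_map_apply (μ := P) hX.aemeasurable T
  have hνA : Measurable fun x => ∫⁻ θ in A, ENNReal.ofReal (Real.exp (q n x θ)) ∂prior n :=
    (measurable_ofReal_exp hq).lintegral_prod_right'
  calc r * a * Mfun lam prior q n Set.univ Set.univ * P (X ⁻¹' T)
      ≤ r * a * Mfun lam prior q n Set.univ Set.univ * ∫⁻ x in T, g x ∂lam n := by gcongr
    _ ≤ ∫⁻ x in T, r * a * Mfun lam prior q n Set.univ Set.univ * g x ∂lam n :=
        lintegral_const_mul_le _ _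
    _ ≤ ∫⁻ x in T, ∫⁻ θ in A, ENNReal.ofReal (Real.exp (q n x θ)) ∂prior n ∂lam n :=
        setLIntegral_mono hνA fun x hx =>
          mul_le_setLIntegral_of_le_rmarg_div_of_le_rpost (hT x hx).1 (hT x hx).2
    _ = Mfun lam prior q n T A := (Mfun_eq_setLIntegral_setLIntegral hq T A).symm

theorem measure_preimage_le_ofReal [SFinite (lam n)] [SFinite (prior n)]
    {Ω : Type*} [MeasurableSpace Ω] {P : Measure Ω} {X : Ω → χ n} (hX : Measurable X)
    {g : χ n → ℝ≥0∞} (hlaw : P.map X = (lam n).withDensity g)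
    (hq : Measurable fun z : χ n × Θ n => q n z.1 z.2)
    (hM0 : Mfun lam prior q n Set.univ Set.univ ≠ 0)
    (hMtop : Mfun lam prior q n Set.univ Set.univ ≠ ⊤)
    {A B C : Set (Θ n)} (hABC : A ∪ B ∪ C = Set.univ) {S T : Set (χ n)} {a b c δ : ℝ}
    (ha : 0 < a) (hb : 0 < b) (hc : 0 < c) (hδ : 0 < δ)
    (hB : Mfun lam prior q n Set.univ B / Mfun lam prior q n Set.univ Set.univ ≤
      ENNReal.ofReal b)
    (hC : ∀ θ ∈ C, Qfun lam q n Sᶜ θ / Qfun lam q n Set.univ θ ≤ ENNReal.ofReal c)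
    (hTS : T ⊆ Sᶜ) (hT : ∀ x ∈ T, ENNReal.ofReal a ≤ rmarg lam prior q n x / g x ∧
      ENNReal.ofReal ((b + c) / a / δ) ≤ rpost prior q n Aᶜ x) :
    P (X ⁻¹' T) ≤ ENNReal.ofReal δ := by
  have hbc : 0 < b + c := add_pos hb hc
  have hMP : ENNReal.ofReal ((b + c) / δ) * P (X ⁻¹' T) * Mfun lam prior q n Set.univ Set.univ
      ≤ ENNReal.ofReal (b + c) * Mfun lam prior q n Set.univ Set.univ :=
    calc ENNReal.ofReal ((b + c) / δ) * P (X ⁻¹' T) * Mfun lam prior q n Set.univ Set.univ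
        = ENNReal.ofReal ((b + c) / a / δ) * ENNReal.ofReal a *
            Mfun lam prior q n Set.univ Set.univ * P (X ⁻¹' T) := by
          have hra : (b + c) / a / δ * a = (b + c) / δ := by field_simp
          rw [← ENNReal.ofReal_mul (by positivity), hra]
          ring
      _ ≤ Mfun lam prior q n T Aᶜ := mul_measure_preimage_le_Mfun hX hlaw hq hT
      _ ≤ Mfun lam prior q n Sᶜ Aᶜ := Mfun_mono_left hTS _
      _ ≤ ENNReal.ofReal (b + c) * Mfun lam prior q n Set.univ Set.univ := by
          rw [ENNReal.ofReal_add hb.le hc.le]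
          exact Mfun_compl_le_add_mul hq hM0 hMtop hABC hB (by positivity)
            ENNReal.ofReal_ne_top hC
  have hP : P (X ⁻¹' T) * ENNReal.ofReal ((b + c) / δ) ≤ ENNReal.ofReal (b + c) := by
    rw [mul_comm]
    exact (ENNReal.mul_le_mul_iff_left hM0 hMtop).1 hMP
  calc P (X ⁻¹' T)
      ≤ ENNReal.ofReal (b + c) / ENNReal.ofReal ((b + c) / δ) :=
        (ENNReal.le_div_iff_mul_le (by simp [div_pos hbc hδ]) (Or.inl ENNReal.ofReal_ne_top)).2 hP
    _ = ENNReal.ofReal δ := by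
        rw [← ENNReal.ofReal_div_of_pos (div_pos hbc hδ), div_div_cancel₀ hbc.ne']

end Bounds

theorem measure_limsup_null_of_subset_union {α : Type*} [MeasurableSpace α] {μ : Measure α}
    {E s t : ℕ → Set α} (hE : ∀ n, E n ⊆ s n ∪ t n) (hs : μ (limsup s atTop) = 0)
    (ht : μ (limsup t atTop) = 0) : μ (limsup E atTop) = 0 := by
  refine measure_mono_null (fun ω hω => ?_) (measure_union_null hs ht)
  simp only [Set.mem_union, mem_limsup_iff_frequently_mem] at hω ⊢
  exact frequently_or_distrib.1 (hω.mono fun n hn => hE n hn)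

theorem stmt_1_general
    {Ω : Type*} [MeasurableSpace Ω] (P : Measure Ω)
    {χ Θ : ℕ → Type*} [∀ n, MeasurableSpace (χ n)] [∀ n, MeasurableSpace (Θ n)]
    (lam : ∀ n, Measure (χ n)) [∀ n, SigmaFinite (lam n)]
    (X : ∀ n, Ω → χ n) (hX : ∀ n, Measurable (X n))
    (g : ∀ n, χ n → ℝ≥0∞)
    (hlaw : ∀ n, P.map (X n) = (lam n).withDensity (g n))
    (prior : ∀ n, Measure (Θ n)) (hprior : ∀ n, prior n Set.univ ≤ 1)
    (q : ∀ n, χ n → Θ n → ℝ)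
    (hq : ∀ n, Measurable (fun z : χ n × Θ n => q n z.1 z.2))
    (hM : ∀ n, 0 < Mfun lam prior q n Set.univ Set.univ
      ∧ Mfun lam prior q n Set.univ Set.univ < ⊤)
    (A B C : ∀ n, Set (Θ n))
    (a b c : ℕ → ℝ) (ha : ∀ n, 0 < a n) (hb : ∀ n, 0 < b n) (hc : ∀ n, 0 < c n)
    -- (A1)
    (hA1 : ∀ n, A n ∪ B n ∪ C n = Set.univ)
    -- (A2)
    (hA2 : ∀ n, Mfun lam prior q n Set.univ (B n) / Mfun lam prior q n Set.univ Set.univ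
      ≤ ENNReal.ofReal (b n))
    -- (A3)*
    (hA3 : ∃ S : ∀ n, Set (χ n), (∀ n, MeasurableSet (S n)) ∧
      P (Filter.limsup (fun n => {ω | X n ω ∈ S n}) atTop) = 0 ∧
      ∀ n, ∀ θ ∈ C n, Qfun lam q n (S n)ᶜ θ / Qfun lam q n Set.univ θ ≤ ENNReal.ofReal (c n))
    -- (A4)*
    (hA4 : P (Filter.limsup (fun n => {ω |
      rmarg lam prior q n (X n ω) / g n (X n ω) < ENNReal.ofReal (a n)}) atTop) = 0) :
    ∀ δ : ℕ → ℝ, (∀ n, 0 < δ n) → Summable δ →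
      P (Filter.limsup (fun n => {ω |
        ENNReal.ofReal ((b n + c n) / a n / δ n) < rpost prior q n (A n)ᶜ (X n ω)}) atTop)
        = 0 := by
  intro δ hδ hδsum
  obtain ⟨S, -, hS, hSC⟩ := hA3
  let T : ∀ n, Set (χ n) := fun n => {x | x ∉ S n ∧
    ¬rmarg lam prior q n x / g n x < ENNReal.ofReal (a n) ∧
    ENNReal.ofReal ((b n + c n) / a n / δ n) < rpost prior q n (A n)ᶜ x}
  have hT : ∀ n, P (X n ⁻¹' T n) ≤ ENNReal.ofReal (δ n) := fun n => by
    have : IsFiniteMeasure (prior n) := ⟨(hprior n).trans_lt ENNReal.one_lt_top⟩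
    exact measure_preimage_le_ofReal (hX n) (hlaw n) (hq n) (hM n).1.ne' (hM n).2.ne (hA1 n)
      (ha n) (hb n) (hc n) (hδ n) (hA2 n) (hSC n) (fun x hx => hx.1)
      fun x hx => ⟨not_lt.1 hx.2.1, hx.2.2.le⟩
  have hTsum : ∑' n, P (X n ⁻¹' T n) ≠ ⊤ := by
    refine ne_top_of_le_ne_top ?_ (ENNReal.tsum_le_tsum hT)
    rw [← ENNReal.ofReal_tsum_of_nonneg (fun n => (hδ n).le) hδsum]
    exact ENNReal.ofReal_ne_top
  refine measure_limsup_null_of_subset_union (fun n ω hω => ?_)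
    (measure_limsup_null_of_subset_union (fun n => subset_rfl) hS hA4)
    (measure_limsup_atTop_eq_zero hTsum)
  simp only [T, Set.mem_union, Set.mem_ofPred_eq, Set.mem_preimage] at hω ⊢
  tauto

/-- Lemma: sufficiency part of exponential consistency of the
`R^(α)`-posterior, almost-sure form. -/
theorem stmt_1
    {Ω : Type*} [MeasurableSpace Ω] (P : Measure Ω) [IsProbabilityMeasure P]
    {χ Θ : ℕ → Type*} [∀ n, MeasurableSpace (χ n)] [∀ n, MeasurableSpace (Θ n)]
    (lam : ∀ n, Measure (χ n)) [∀ n, SigmaFinite (lam n)]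
    (X : ∀ n, Ω → χ n) (hX : ∀ n, Measurable (X n))
    (g : ∀ n, χ n → ℝ≥0∞) (hgmeas : ∀ n, Measurable (g n))
    (hlaw : ∀ n, P.map (X n) = (lam n).withDensity (g n))
    (prior : ∀ n, Measure (Θ n)) (hprior : ∀ n, prior n Set.univ ≤ 1)
    (q : ∀ n, χ n → Θ n → ℝ)
    (hq : ∀ n, Measurable (fun z : χ n × Θ n => q n z.1 z.2))
    (hM : ∀ n, 0 < Mfun lam prior q n Set.univ Set.univ
      ∧ Mfun lam prior q n Set.univ Set.univ < ⊤)
    (A B C : ∀ n, Set (Θ n))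
    (hAmeas : ∀ n, MeasurableSet (A n)) (hBmeas : ∀ n, MeasurableSet (B n))
    (hCmeas : ∀ n, MeasurableSet (C n))
    (a b c : ℕ → ℝ) (ha : ∀ n, 0 < a n) (hb : ∀ n, 0 < b n) (hc : ∀ n, 0 < c n)
    (hbto : Tendsto b atTop (nhds 0)) (hcto : Tendsto c atTop (nhds 0))
    -- (A1)
    (hA1 : ∀ n, A n ∪ B n ∪ C n = Set.univ)
    -- (A2)
    (hA2 : ∀ n, Mfun lam prior q n Set.univ (B n) / Mfun lam prior q n Set.univ Set.univ
      ≤ ENNReal.ofReal (b n))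
    -- (A3)*
    (hA3 : ∃ S : ∀ n, Set (χ n), (∀ n, MeasurableSet (S n)) ∧
      P (Filter.limsup (fun n => {ω | X n ω ∈ S n}) atTop) = 0 ∧
      ∀ n, ∀ θ ∈ C n, Qfun lam q n (S n)ᶜ θ / Qfun lam q n Set.univ θ ≤ ENNReal.ofReal (c n))
    -- (A4)*
    (hA4 : P (Filter.limsup (fun n => {ω |
      rmarg lam prior q n (X n ω) / g n (X n ω) < ENNReal.ofReal (a n)}) atTop) = 0) :
    ∀ δ : ℕ → ℝ, (∀ n, 0 < δ n) → Summable δ →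
      P (Filter.limsup (fun n => {ω |
        ENNReal.ofReal ((b n + c n) / a n / δ n) < rpost prior q n (A n)ᶜ (X n ω)}) atTop)
        = 0 :=
  stmt_1_general P lam X hX g hlaw prior hprior q hq hM A B C a b c ha hb hc hA1 hA2 hA3 hA4
end
end

section
/- Suppose that for a sequence of measurable parameter sets A_n ∈ B_{Θ_n} and a sequence of positive constants r_n one has P( π_n^{post}(A_n^c | X_n) > r_n infinitely often ) = 0. Then for any positive sequences b_n and c_n satisfying b_n c_n ≥ r_n for all n, there exist measurable sets B_n, C_n ∈ B_{Θ_n} such that (A1) A_n ∪ B_n ∪ C_n = Θ_n, (A2) M_n(χ_n, B_n)/M_n(χ_n, Θ_n) ≤ b_n, and (A3)* there exist S_n ∈ B_n with P(X_n ∈ S_n infinitely often) = 0 and sup_{θ∈C_n} Q_n(S_n^c|θ)/Q_n(χ_n|θ) ≤ c_n. -/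
/-!
Take `S_n = {x | π_n(A_nᶜ | x) > r_n}`, which `X_n` eventually avoids almost surely by hypothesis,
`C_n = {θ | Q_n(S_nᶜ | θ) ≤ c_n Q_n(χ_n | θ)}` and `B_n = A_nᶜ \ C_n`. On `B_n` the ratio exceeds
`c_n`, while off `S_n` the posterior mass of `A_nᶜ ⊇ B_n` is at most `r_n ≤ b_n c_n`; integrating
the first bound over `π_n` and the second over `λ^n` (Tonelli) gives
`c_n M_n(χ_n, B_n) ≤ M_n(S_nᶜ, B_n) ≤ b_n c_n M_n(χ_n, Θ_n)`.
-/

open MeasureTheory ENNReal Filter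

noncomputable section

variable {χ Θ : ℕ → Type*} [∀ n, MeasurableSpace (χ n)] [∀ n, MeasurableSpace (Θ n)]

section Tonelli

variable {α β : Type*} [MeasurableSpace α] [MeasurableSpace β] {μ : Measure α} {ν : Measure β}

theorem const_mul_setLIntegral_le_of_le_div {f g : β → ℝ≥0∞} {s : Set β} (hs : MeasurableSet s)
    {c : ℝ≥0∞} (h : ∀ y ∈ s, c ≤ f y / g y) :
    c * ∫⁻ y in s, g y ∂ν ≤ ∫⁻ y in s, f y ∂ν :=
  (lintegral_const_mul_le c g).trans
    (setLIntegral_mono' hs fun y hy => ENNReal.mul_le_of_le_div (h y hy))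

theorem setLIntegral_setLIntegral_compl_le [SFinite μ] [SFinite ν] {f : α → β → ℝ≥0∞}
    (hf : Measurable (Function.uncurry f)) {s : Set α} (hs : MeasurableSet s) {t : Set β}
    {c : ℝ≥0∞} (h : ∀ x ∉ s, ∫⁻ y in t, f x y ∂ν ≤ c * ∫⁻ y, f x y ∂ν) :
    ∫⁻ y in t, ∫⁻ x in sᶜ, f x y ∂μ ∂ν ≤ c * ∫⁻ y, ∫⁻ x, f x y ∂μ ∂ν :=
  calc ∫⁻ y in t, ∫⁻ x in sᶜ, f x y ∂μ ∂ν
      = ∫⁻ x in sᶜ, ∫⁻ y in t, f x y ∂ν ∂μ := (lintegral_lintegral_swap hf.aemeasurable).symm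
    _ ≤ ∫⁻ x in sᶜ, c * ∫⁻ y, f x y ∂ν ∂μ := setLIntegral_mono' hs.compl h
    _ ≤ ∫⁻ x, c * ∫⁻ y, f x y ∂ν ∂μ := setLIntegral_le_lintegral _ _
    _ = c * ∫⁻ y, ∫⁻ x, f x y ∂μ ∂ν := by
      rw [lintegral_const_mul c hf.lintegral_prod_right, lintegral_lintegral_swap hf.aemeasurable]

end Tonelli

section Posterior

variable {lam : ∀ n, Measure (χ n)} {prior : ∀ n, Measure (Θ n)} {q : ∀ n, χ n → Θ n → ℝ}
  {n : ℕ}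

theorem measurable_exp_likelihood (hq : Measurable fun z : χ n × Θ n => q n z.1 z.2) :
    Measurable (Function.uncurry fun x θ => ENNReal.ofReal (Real.exp (q n x θ))) :=
  ENNReal.measurable_ofReal.comp (Real.measurable_exp.comp hq)

theorem measurable_rpost [SFinite (prior n)] (hq : Measurable fun z : χ n × Θ n => q n z.1 z.2)
    (A : Set (Θ n)) : Measurable (rpost prior q n A) :=
  (measurable_exp_likelihood hq).lintegral_prod_right.div
    (measurable_exp_likelihood hq).lintegral_prod_right

theorem Mfun_div_le_of_rpost_le [SFinite (lam n)] [SFinite (prior n)]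
    (hq : Measurable fun z : χ n × Θ n => q n z.1 z.2) {S : Set (χ n)} (hS : MeasurableSet S)
    {A B : Set (Θ n)} (hB : MeasurableSet B) (hBA : B ⊆ Aᶜ) {b c : ℝ≥0∞} (hb0 : b ≠ 0)
    (hb : b ≠ ⊤) (hc0 : c ≠ 0) (hc : c ≠ ⊤) (hpost : ∀ x ∉ S, rpost prior q n Aᶜ x ≤ b * c)
    (hratio : ∀ θ ∈ B, c ≤ Qfun lam q n Sᶜ θ / Qfun lam q n Set.univ θ) :
    Mfun lam prior q n Set.univ B / Mfun lam prior q n Set.univ Set.univ ≤ b := by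
  have hoff : Mfun lam prior q n Sᶜ B ≤ b * c * Mfun lam prior q n Set.univ Set.univ := by
    simpa only [Mfun, Qfun, Measure.restrict_univ] using
      setLIntegral_setLIntegral_compl_le (measurable_exp_likelihood hq) hS fun x hx =>
        (lintegral_mono_set hBA).trans <| (ENNReal.div_le_iff_le_mul (Or.inr (mul_ne_top hb hc))
          (Or.inr (mul_ne_zero hb0 hc0))).mp (hpost x hx)
  refine ENNReal.div_le_of_le_mul ((ENNReal.mul_le_mul_iff_right hc0 hc).mp ?_)
  calc c * Mfun lam prior q n Set.univ B
      ≤ Mfun lam prior q n Sᶜ B := const_mul_setLIntegral_le_of_le_div hB hratio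
    _ ≤ b * c * Mfun lam prior q n Set.univ Set.univ := hoff
    _ = c * (b * Mfun lam prior q n Set.univ Set.univ) := by ring

end Posterior

theorem stmt_3_general
    {Ω : Type*} [MeasurableSpace Ω] (P : Measure Ω) [IsProbabilityMeasure P]
    {χ Θ : ℕ → Type*} [∀ n, MeasurableSpace (χ n)] [∀ n, MeasurableSpace (Θ n)]
    (lam : ∀ n, Measure (χ n)) [∀ n, SigmaFinite (lam n)]
    (X : ∀ n, Ω → χ n)
    (prior : ∀ n, Measure (Θ n)) (hprior : ∀ n, prior n Set.univ ≤ 1)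
    (q : ∀ n, χ n → Θ n → ℝ)
    (hq : ∀ n, Measurable (fun z : χ n × Θ n => q n z.1 z.2))
    -- measurability of θ ↦ Q_n(S|θ)/Q_n(χ_n|θ)
    (hQmeas : ∀ n (S : Set (χ n)), MeasurableSet S →
      Measurable (fun θ => Qfun lam q n S θ / Qfun lam q n Set.univ θ))
    (A : ∀ n, Set (Θ n)) (hAmeas : ∀ n, MeasurableSet (A n))
    (r : ℕ → ℝ)
    (hio : P (Filter.limsup (fun n => {ω |
      ENNReal.ofReal (r n) < rpost prior q n (A n)ᶜ (X n ω)}) atTop) = 0) :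
    ∀ b c : ℕ → ℝ, (∀ n, 0 < b n) → (∀ n, 0 < c n) → (∀ n, r n ≤ b n * c n) →
      ∃ B C : ∀ n, Set (Θ n), (∀ n, MeasurableSet (B n)) ∧ (∀ n, MeasurableSet (C n)) ∧
        -- (A1)
        (∀ n, A n ∪ B n ∪ C n = Set.univ) ∧
        -- (A2)
        (∀ n, Mfun lam prior q n Set.univ (B n) / Mfun lam prior q n Set.univ Set.univ
          ≤ ENNReal.ofReal (b n)) ∧
        -- (A3)*
        (∃ S : ∀ n, Set (χ n), (∀ n, MeasurableSet (S n)) ∧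
          P (Filter.limsup (fun n => {ω | X n ω ∈ S n}) atTop) = 0 ∧
          ∀ n, ∀ θ ∈ C n,
            Qfun lam q n (S n)ᶜ θ / Qfun lam q n Set.univ θ ≤ ENNReal.ofReal (c n)) := by
  intro b c hb hc hbc
  have : ∀ n, IsFiniteMeasure (prior n) := fun n => ⟨(hprior n).trans_lt one_lt_top⟩
  set S : ∀ n, Set (χ n) := fun n => {x | ENNReal.ofReal (r n) < rpost prior q n (A n)ᶜ x}
  set C : ∀ n, Set (Θ n) := fun n =>
    {θ | Qfun lam q n (S n)ᶜ θ / Qfun lam q n Set.univ θ ≤ ENNReal.ofReal (c n)}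
  have hS : ∀ n, MeasurableSet (S n) := fun n =>
    measurableSet_lt measurable_const (measurable_rpost (hq n) _)
  have hC : ∀ n, MeasurableSet (C n) := fun n =>
    measurableSet_le (hQmeas n _ (hS n).compl) measurable_const
  have hB : ∀ n, MeasurableSet ((A n)ᶜ ∩ (C n)ᶜ) := fun n => (hAmeas n).compl.inter (hC n).compl
  refine ⟨fun n => (A n)ᶜ ∩ (C n)ᶜ, C, hB, hC, fun n => ?_, fun n => ?_, S, hS, hio,
    fun n θ hθ => hθ⟩
  · ext θ
    simp only [Set.mem_union, Set.mem_inter_iff, Set.mem_compl_iff, Set.mem_univ, iff_true]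
    tauto
  · refine Mfun_div_le_of_rpost_le (hq n) (hS n) (hB n) Set.inter_subset_left
      (ofReal_pos.2 (hb n)).ne' ofReal_ne_top (ofReal_pos.2 (hc n)).ne' ofReal_ne_top
      (fun x hx => ?_) fun θ hθ => (lt_of_not_ge (α := ℝ≥0∞) hθ.2).le
    rw [← ofReal_mul (hb n).le]
    exact (not_lt.1 hx).trans (ofReal_le_ofReal (hbc n))

/-- Lemma: necessity part, almost-sure form. -/
theorem stmt_3
    {Ω : Type*} [MeasurableSpace Ω] (P : Measure Ω) [IsProbabilityMeasure P]
    {χ Θ : ℕ → Type*} [∀ n, MeasurableSpace (χ n)] [∀ n, MeasurableSpace (Θ n)]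
    (lam : ∀ n, Measure (χ n)) [∀ n, SigmaFinite (lam n)]
    (X : ∀ n, Ω → χ n) (hX : ∀ n, Measurable (X n))
    (g : ∀ n, χ n → ℝ≥0∞) (hgmeas : ∀ n, Measurable (g n))
    (hlaw : ∀ n, P.map (X n) = (lam n).withDensity (g n))
    (prior : ∀ n, Measure (Θ n)) (hprior : ∀ n, prior n Set.univ ≤ 1)
    (q : ∀ n, χ n → Θ n → ℝ)
    (hq : ∀ n, Measurable (fun z : χ n × Θ n => q n z.1 z.2))
    (hM : ∀ n, 0 < Mfun lam prior q n Set.univ Set.univ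
      ∧ Mfun lam prior q n Set.univ Set.univ < ⊤)
    -- measurability of θ ↦ Q_n(S|θ)/Q_n(χ_n|θ)
    (hQmeas : ∀ n (S : Set (χ n)), MeasurableSet S →
      Measurable (fun θ => Qfun lam q n S θ / Qfun lam q n Set.univ θ))
    (A : ∀ n, Set (Θ n)) (hAmeas : ∀ n, MeasurableSet (A n))
    (r : ℕ → ℝ) (hr : ∀ n, 0 < r n)
    (hio : P (Filter.limsup (fun n => {ω |
      ENNReal.ofReal (r n) < rpost prior q n (A n)ᶜ (X n ω)}) atTop) = 0) :
    ∀ b c : ℕ → ℝ, (∀ n, 0 < b n) → (∀ n, 0 < c n) → (∀ n, r n ≤ b n * c n) →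
      ∃ B C : ∀ n, Set (Θ n), (∀ n, MeasurableSet (B n)) ∧ (∀ n, MeasurableSet (C n)) ∧
        -- (A1)
        (∀ n, A n ∪ B n ∪ C n = Set.univ) ∧
        -- (A2)
        (∀ n, Mfun lam prior q n Set.univ (B n) / Mfun lam prior q n Set.univ Set.univ
          ≤ ENNReal.ofReal (b n)) ∧
        -- (A3)*
        (∃ S : ∀ n, Set (χ n), (∀ n, MeasurableSet (S n)) ∧
          P (Filter.limsup (fun n => {ω | X n ω ∈ S n}) atTop) = 0 ∧
          ∀ n, ∀ θ ∈ C n,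
            Qfun lam q n (S n)ᶜ θ / Qfun lam q n Set.univ θ ≤ ENNReal.ofReal (c n)) :=
  stmt_3_general P lam X prior hprior q hq hQmeas A hAmeas r hio
end
end

section
/- In the IID setup, suppose that for every ε > 0 the posterior probability π_n^{post}( {θ ∈ Θ : d_1(g, f_θ) > ε} | X^n ) is exponentially small with probability one, where d_1(p_1, p_2) = ∫|p_1 − p_2| dλ. Then, for the L1 loss L(f, f') = ∫|f − f'| dλ as well as for the squared Hellinger loss L(f, f') = ∫(√f − √f')² dλ, any sequence ĝ_n of approximate R^(α)-Bayes predictive density estimators with respect to L satisfies d_1(g, ĝ_n) → 0 as n → ∞ with P-probability one. -/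
open MeasureTheory ENNReal Filter

noncomputable section

variable {χ Θ : Type*} [MeasurableSpace χ]

/-- `q_θ(y) = (1/α)(f_θ(y)^α − 1) − (1/(1+α)) ∫ f_θ^{1+α} dλ`. -/
def qtheta (lam : Measure χ) (f : Θ → χ → ℝ) (α : ℝ) (θ : Θ) (y : χ) : ℝ :=
  (1 / α) * ((f θ y) ^ α - 1) - (1 / (1 + α)) * ∫ z, (f θ z) ^ (1 + α) ∂lam

/-- The α-likelihood `q_n(x₁,…,x_n|θ) = Σ_i q_θ(x_i)`. -/
def qlik (lam : Measure χ) (f : Θ → χ → ℝ) (α : ℝ) (n : ℕ) (x : Fin n → χ) (θ : Θ) : ℝ :=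
  ∑ i, qtheta lam f α θ (x i)

/-- The n-fold product measure `λ^n`. -/
def lamN (lam : Measure χ) (n : ℕ) : Measure (Fin n → χ) := Measure.pi fun _ => lam

/-- `Q_n(S|θ)`. -/
def QN (lam : Measure χ) (f : Θ → χ → ℝ) (α : ℝ) (n : ℕ) (S : Set (Fin n → χ)) (θ : Θ) :
    ℝ≥0∞ :=
  ∫⁻ x in S, ENNReal.ofReal (Real.exp (qlik lam f α n x θ)) ∂(lamN lam n)

variable [MeasurableSpace Θ]

/-- `M_n(χ_n, A)`. -/
def MN (lam : Measure χ) (prior : Measure Θ) (f : Θ → χ → ℝ) (α : ℝ) (n : ℕ)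
    (A : Set Θ) : ℝ≥0∞ :=
  ∫⁻ θ in A, QN lam f α n Set.univ θ ∂prior

/-- The `R^(α)`-posterior probability of `A ⊆ Θ` given the data `x`. -/
def rpostIID (lam : Measure χ) (prior : Measure Θ) (f : Θ → χ → ℝ) (α : ℝ) (n : ℕ)
    (A : Set Θ) (x : Fin n → χ) : ℝ≥0∞ :=
  (∫⁻ θ in A, ENNReal.ofReal (Real.exp (qlik lam f α n x θ)) ∂prior) /
    (∫⁻ θ, ENNReal.ofReal (Real.exp (qlik lam f α n x θ)) ∂prior)

/-- The α-modified prior `π̃_n^{(α)}`. -/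
def priorTilde (lam : Measure χ) (prior : Measure Θ) (f : Θ → χ → ℝ) (α : ℝ) (n : ℕ) :
    Measure Θ :=
  (MN lam prior f α n Set.univ)⁻¹ • prior.withDensity (fun θ => QN lam f α n Set.univ θ)

/-- `Q(χ|θ) = ∫ exp(q_θ(y)) λ(dy)`. -/
def Qone (lam : Measure χ) (f : Θ → χ → ℝ) (α : ℝ) (θ : Θ) : ℝ :=
  ∫ y, Real.exp (qtheta lam f α θ y) ∂lam

/-- The α-modified model density `q̃(y|θ) = exp(q_θ(y))/Q(χ|θ)`. -/
def qtilde (lam : Measure χ) (f : Θ → χ → ℝ) (α : ℝ) (θ : Θ) (y : χ) : ℝ :=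
  Real.exp (qtheta lam f α θ y) / Qone lam f α θ

/-- The Kullback–Leibler divergence between densities w.r.t. `lam`. -/
def KLD (lam : Measure χ) (p₁ p₂ : χ → ℝ) : ℝ :=
  ∫ y, p₁ y * Real.log (p₁ y / p₂ y) ∂lam

/-- The `R^(α)`-posterior distribution on `Θ` given data `x`, as a measure. -/
def rpostMeasure (lam : Measure χ) (prior : Measure Θ) (f : Θ → χ → ℝ) (α : ℝ) (n : ℕ)
    (x : Fin n → χ) : Measure Θ :=
  (∫⁻ θ, ENNReal.ofReal (Real.exp (qlik lam f α n x θ)) ∂prior)⁻¹ •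
    prior.withDensity (fun θ => ENNReal.ofReal (Real.exp (qlik lam f α n x θ)))

/-- `p` is a probability density with respect to `lam`. -/
def IsDens (lam : Measure χ) (p : χ → ℝ) : Prop :=
  (∀ y, 0 ≤ p y) ∧ Measurable p ∧ ∫ y, p y ∂lam = 1

/-- The L₁ distance between densities. -/
def dOne (lam : Measure χ) (p₁ p₂ : χ → ℝ) : ℝ :=
  ∫ y, |p₁ y - p₂ y| ∂lam

/-- The squared Hellinger distance between densities. -/
def dHell (lam : Measure χ) (p₁ p₂ : χ → ℝ) : ℝ :=
  ∫ y, (Real.sqrt (p₁ y) - Real.sqrt (p₂ y)) ^ 2 ∂lam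

/-!
If the posterior mass of the L₁-ball of radius ε around `g` is at least `1 - ε`, then the
posterior L₁-risk of `g` itself is at most `3ε`, so the risk of an approximate Bayes estimator
`ĝ` is at most `4ε`. Both losses dominate the L₁ distance up to an additive slack,
`d₁ ≤ L / s + s`, and the triangle inequality through `f_θ`, averaged over the posterior with
`s = √ε`, gives `d₁(g, ĝ) ≤ 3ε + 5√ε`. Exponential smallness of the posterior mass outside the
ball makes this hold eventually along almost every sample path, for each `ε = 1/(k+1)`.
-/

open Topology

namespace IsDens

variable {lam : Measure χ} {p : χ → ℝ}

lemma integrable (hp : IsDens lam p) : Integrable p lam :=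
  Integrable.of_integral_ne_zero (by rw [hp.2.2]; exact one_ne_zero)

end IsDens

section Distances

variable {lam : Measure χ} {p q r : χ → ℝ}

lemma dOne_nonneg (p q : χ → ℝ) : 0 ≤ dOne lam p q :=
  integral_nonneg fun _ => abs_nonneg _

lemma dOne_comm (p q : χ → ℝ) : dOne lam p q = dOne lam q p :=
  integral_congr_ae (Eventually.of_forall fun _ => abs_sub_comm _ _)

lemma integrable_abs_sub (hp : IsDens lam p) (hq : IsDens lam q) :
    Integrable (fun y => |p y - q y|) lam :=
  (hp.integrable.sub hq.integrable).abs

lemma dOne_le_two (hp : IsDens lam p) (hq : IsDens lam q) : dOne lam p q ≤ 2 := by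
  have h : dOne lam p q ≤ ∫ y, (p y + q y) ∂lam :=
    integral_mono (integrable_abs_sub hp hq) (hp.integrable.add hq.integrable) fun y =>
      (abs_sub _ _).trans_eq (by rw [abs_of_nonneg (hp.1 y), abs_of_nonneg (hq.1 y)])
  rw [integral_add hp.integrable hq.integrable, hp.2.2, hq.2.2] at h
  linarith

lemma dOne_triangle (hp : IsDens lam p) (hq : IsDens lam q) (hr : IsDens lam r) :
    dOne lam p r ≤ dOne lam p q + dOne lam q r := by
  rw [dOne, dOne, dOne, ← integral_add (integrable_abs_sub hp hq) (integrable_abs_sub hq hr)]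
  exact integral_mono (integrable_abs_sub hp hr)
    ((integrable_abs_sub hp hq).add (integrable_abs_sub hq hr)) fun _ => abs_sub_le _ _ _

lemma sq_sqrt_sub_sqrt_le_abs_sub {a b : ℝ} (ha : 0 ≤ a) (hb : 0 ≤ b) :
    (√a - √b) ^ 2 ≤ |a - b| := by
  have hab : a - b = (√a - √b) * (√a + √b) := by
    linear_combination Real.sq_sqrt hb - Real.sq_sqrt ha
  rw [hab, abs_mul, abs_of_nonneg (by positivity : 0 ≤ √a + √b), sq, ← abs_mul_abs_self]
  gcongr
  exact abs_sub_le_iff.2 ⟨by linarith [Real.sqrt_nonneg b], by linarith [Real.sqrt_nonneg a]⟩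

lemma abs_sub_le_sq_sqrt_sub_sqrt_div_add {a b s : ℝ} (ha : 0 ≤ a) (hb : 0 ≤ b) (hs : 0 < s) :
    |a - b| ≤ (√a - √b) ^ 2 / s + s * (a + b) / 2 := by
  -- AM-GM: `|√a - √b| (√a + √b) ≤ (√a - √b)² / s + s (√a + √b)² / 4 ≤ … + s (a + b) / 2`
  have hab : |a - b| = |√a - √b| * (√a + √b) := by
    rw [← abs_of_nonneg (by positivity : 0 ≤ √a + √b), ← abs_mul]
    congr 1
    linear_combination Real.sq_sqrt hb - Real.sq_sqrt ha
  have hamgm : |√a - √b| * (√a + √b) ≤ (√a - √b) ^ 2 / s + s * (√a + √b) ^ 2 / 4 := by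
    rw [← sq_abs (√a - √b), div_add_div _ _ hs.ne' four_ne_zero, le_div_iff₀ (by positivity)]
    nlinarith [sq_nonneg (2 * |√a - √b| - s * (√a + √b))]
  have hsum : (√a + √b) ^ 2 ≤ 2 * (a + b) := by
    nlinarith [sq_nonneg (√a - √b), Real.sq_sqrt ha, Real.sq_sqrt hb]
  rw [hab]
  nlinarith

lemma measurable_sq_sqrt_sub_sqrt (hp : IsDens lam p) (hq : IsDens lam q) :
    Measurable fun y => (√(p y) - √(q y)) ^ 2 :=
  (hp.2.1.sqrt.sub hq.2.1.sqrt).pow_const 2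

lemma integrable_sq_sqrt_sub_sqrt (hp : IsDens lam p) (hq : IsDens lam q) :
    Integrable (fun y => (√(p y) - √(q y)) ^ 2) lam :=
  (integrable_abs_sub hp hq).mono' (measurable_sq_sqrt_sub_sqrt hp hq).aestronglyMeasurable
    (Eventually.of_forall fun y => by
      rw [Real.norm_eq_abs, abs_of_nonneg (sq_nonneg _)]
      exact sq_sqrt_sub_sqrt_le_abs_sub (hp.1 y) (hq.1 y))

lemma dHell_le_dOne (hp : IsDens lam p) (hq : IsDens lam q) : dHell lam p q ≤ dOne lam p q :=
  integral_mono (integrable_sq_sqrt_sub_sqrt hp hq) (integrable_abs_sub hp hq) fun y =>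
    sq_sqrt_sub_sqrt_le_abs_sub (hp.1 y) (hq.1 y)

lemma dOne_le_dHell_div_add (hp : IsDens lam p) (hq : IsDens lam q) {s : ℝ} (hs : 0 < s) :
    dOne lam p q ≤ dHell lam p q / s + s := by
  have hsum : Integrable (fun y => s * (p y + q y) / 2) lam :=
    ((hp.integrable.add hq.integrable).const_mul s).div_const 2
  have h : dOne lam p q ≤ ∫ y, ((√(p y) - √(q y)) ^ 2 / s + s * (p y + q y) / 2) ∂lam :=
    integral_mono (integrable_abs_sub hp hq)
      ((integrable_sq_sqrt_sub_sqrt hp hq).div_const s |>.add hsum) fun y =>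
      abs_sub_le_sq_sqrt_sub_sqrt_div_add (hp.1 y) (hq.1 y) hs
  rw [integral_add ((integrable_sq_sqrt_sub_sqrt hp hq).div_const s) hsum, integral_div,
    integral_div, integral_const_mul, integral_add hp.integrable hq.integrable, hp.2.2,
    hq.2.2] at h
  rw [dHell]
  linarith

lemma le_div_add_of_le_two {a s : ℝ} (ha : 0 ≤ a) (ha2 : a ≤ 2) (hs : 0 < s) : a ≤ a / s + s := by
  rw [div_add' _ _ _ hs.ne', le_div_iff₀ hs]
  rcases le_total s 1 with h | h <;> nlinarith

lemma dOne_le_dOne_div_add (hp : IsDens lam p) (hq : IsDens lam q) {s : ℝ} (hs : 0 < s) :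
    dOne lam p q ≤ dOne lam p q / s + s :=
  le_div_add_of_le_two (dOne_nonneg p q) (dOne_le_two hp hq) hs

end Distances

lemma exists_measurable_majorant_lintegral_eq {π : Measure Θ} [IsProbabilityMeasure π]
    {h : Θ → ℝ} {b : ℝ} (hb : ∀ θ, h θ ≤ b) (ε : ℝ) :
    ∃ B : Θ → ℝ≥0∞, Measurable B ∧ (∀ θ, ENNReal.ofReal (h θ) ≤ B θ) ∧
      ∫⁻ θ, B θ ∂π = ENNReal.ofReal ε + ENNReal.ofReal b * π {θ | ε < h θ} := by
  -- `h` need not be measurable; a measurable hull of `{ε < h}` carries the same mass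
  set T := toMeasurable π {θ | ε < h θ}
  have hT : MeasurableSet T := measurableSet_toMeasurable _ _
  refine ⟨fun θ => ENNReal.ofReal ε + T.indicator (fun _ => ENNReal.ofReal b) θ,
    (measurable_const.indicator hT).const_add _, fun θ => ?_, ?_⟩
  · dsimp only
    by_cases hθ : θ ∈ T
    · rw [Set.indicator_of_mem hθ]
      exact (ENNReal.ofReal_le_ofReal (hb θ)).trans le_add_self
    · rw [Set.indicator_of_notMem hθ, add_zero]
      exact ENNReal.ofReal_le_ofReal (not_lt.1 fun h => hθ (subset_toMeasurable _ _ h))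
  · rw [lintegral_add_left measurable_const, lintegral_const, measure_univ, mul_one,
      lintegral_indicator_const hT, measure_toMeasurable]

lemma dOne_le_of_lintegral_le {lam : Measure χ} {π : Measure Θ} [IsProbabilityMeasure π]
    {L : (χ → ℝ) → (χ → ℝ) → ℝ}
    (hL_ge : ∀ p q, IsDens lam p → IsDens lam q → ∀ s, 0 < s → dOne lam p q ≤ L p q / s + s)
    {f : Θ → χ → ℝ} (hf : ∀ θ, IsDens lam (f θ)) {g ĝ : χ → ℝ} (hg : IsDens lam g)
    (hĝ : IsDens lam ĝ) {B : Θ → ℝ≥0∞} (hBm : Measurable B)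
    (hdB : ∀ θ, ENNReal.ofReal (dOne lam g (f θ)) ≤ B θ) {a c s : ℝ} (ha : 0 ≤ a) (hc : 0 ≤ c)
    (hs : 0 < s) (hB : ∫⁻ θ, B θ ∂π ≤ ENNReal.ofReal a)
    (hrisk : ∫⁻ θ, ENNReal.ofReal (L (f θ) ĝ) ∂π ≤ ENNReal.ofReal c) :
    dOne lam g ĝ ≤ a + c / s + s := by
  have hpt : ∀ θ, ENNReal.ofReal (dOne lam g ĝ)
      ≤ B θ + (ENNReal.ofReal (L (f θ) ĝ) * ENNReal.ofReal s⁻¹ + ENNReal.ofReal s) := by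
    intro θ
    have h : dOne lam g ĝ ≤ dOne lam g (f θ) + (L (f θ) ĝ / s + s) :=
      (dOne_triangle hg (hf θ) hĝ).trans (add_le_add_right (hL_ge _ _ (hf θ) hĝ s hs) _)
    refine (ENNReal.ofReal_le_ofReal h).trans <| ENNReal.ofReal_add_le.trans <|
      add_le_add (hdB θ) <| ENNReal.ofReal_add_le.trans ?_
    rw [div_eq_mul_inv, ENNReal.ofReal_mul' (inv_nonneg.2 hs.le)]
  refine (ENNReal.ofReal_le_ofReal_iff (by positivity)).1 ?_
  calc ENNReal.ofReal (dOne lam g ĝ) = ∫⁻ _, ENNReal.ofReal (dOne lam g ĝ) ∂π := by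
        rw [lintegral_const, measure_univ, mul_one]
    _ ≤ ∫⁻ θ, (B θ + (ENNReal.ofReal (L (f θ) ĝ) * ENNReal.ofReal s⁻¹ + ENNReal.ofReal s)) ∂π :=
        lintegral_mono hpt
    _ = ∫⁻ θ, B θ ∂π
        + ((∫⁻ θ, ENNReal.ofReal (L (f θ) ĝ) ∂π) * ENNReal.ofReal s⁻¹ + ENNReal.ofReal s) := by
        rw [lintegral_add_left hBm, lintegral_add_right _ measurable_const, lintegral_const,
          measure_univ, mul_one, lintegral_mul_const' _ _ ENNReal.ofReal_ne_top]
    _ ≤ ENNReal.ofReal a + (ENNReal.ofReal c * ENNReal.ofReal s⁻¹ + ENNReal.ofReal s) := by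
        gcongr
    _ = ENNReal.ofReal (a + c / s + s) := by
        rw [add_assoc, div_eq_mul_inv, ENNReal.ofReal_add ha (by positivity),
          ENNReal.ofReal_add (by positivity) hs.le, ENNReal.ofReal_mul hc]

theorem dOne_le_of_lintegral_lt_iInf_add {lam : Measure χ} {π : Measure Θ}
    [IsProbabilityMeasure π] {L : (χ → ℝ) → (χ → ℝ) → ℝ}
    (hL_le : ∀ p q, IsDens lam p → IsDens lam q → L p q ≤ dOne lam p q)
    (hL_ge : ∀ p q, IsDens lam p → IsDens lam q → ∀ s, 0 < s → dOne lam p q ≤ L p q / s + s)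
    {f : Θ → χ → ℝ} (hf : ∀ θ, IsDens lam (f θ)) {g ĝ : χ → ℝ} (hg : IsDens lam g)
    (hĝ : IsDens lam ĝ) {ε δ : ℝ} (hε : 0 < ε) (hδ : δ ≤ ε)
    (hconc : π {θ | ε < dOne lam g (f θ)} ≤ ENNReal.ofReal ε)
    (happrox : ∫⁻ θ, ENNReal.ofReal (L (f θ) ĝ) ∂π
      < (⨅ (g' : χ → ℝ) (_ : IsDens lam g'), ∫⁻ θ, ENNReal.ofReal (L (f θ) g') ∂π)
        + ENNReal.ofReal δ) :
    dOne lam g ĝ ≤ 3 * ε + 5 * √ε := by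
  obtain ⟨B, hBm, hdB, hBint⟩ := exists_measurable_majorant_lintegral_eq (π := π)
    (fun θ => dOne_le_two hg (hf θ)) ε
  have hB : ∫⁻ θ, B θ ∂π ≤ ENNReal.ofReal (3 * ε) := by
    rw [hBint, show 3 * ε = ε + 2 * ε by ring, ENNReal.ofReal_add hε.le (by positivity),
      ENNReal.ofReal_mul zero_le_two]
    gcongr
  have hrisk_g : ∫⁻ θ, ENNReal.ofReal (L (f θ) g) ∂π ≤ ENNReal.ofReal (3 * ε) :=
    (lintegral_mono fun θ => (ENNReal.ofReal_le_ofReal <| (hL_le _ _ (hf θ) hg).trans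
      (dOne_comm _ _).le).trans (hdB θ)).trans hB
  have hrisk : ∫⁻ θ, ENNReal.ofReal (L (f θ) ĝ) ∂π ≤ ENNReal.ofReal (4 * ε) := by
    rw [show 4 * ε = 3 * ε + ε by ring, ENNReal.ofReal_add (by positivity) hε.le]
    exact happrox.le.trans (add_le_add ((iInf₂_le g hg).trans hrisk_g)
      (ENNReal.ofReal_le_ofReal hδ))
  have hs : 0 < √ε := Real.sqrt_pos.2 hε
  have h := dOne_le_of_lintegral_le hL_ge hf hg hĝ hBm hdB (by positivity) (by positivity) hs hB
    hrisk
  have h4 : 4 * ε / √ε = 4 * √ε := by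
    rw [mul_div_assoc, Real.div_sqrt]
  linarith

section Posterior

variable {lam : Measure χ} {prior : Measure Θ} {f : Θ → χ → ℝ} {α : ℝ} {n : ℕ} {x : Fin n → χ}

lemma isProbabilityMeasure_rpostMeasure
    (hpos : 0 < ∫⁻ θ, ENNReal.ofReal (Real.exp (qlik lam f α n x θ)) ∂prior)
    (hfin : (∫⁻ θ, ENNReal.ofReal (Real.exp (qlik lam f α n x θ)) ∂prior) < ⊤) :
    IsProbabilityMeasure (rpostMeasure lam prior f α n x) := by
  constructor
  rw [rpostMeasure, Measure.smul_apply, smul_eq_mul, withDensity_apply _ MeasurableSet.univ,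
    Measure.restrict_univ]
  exact ENNReal.inv_mul_cancel hpos.ne' hfin.ne

lemma rpostMeasure_apply [SFinite prior] (A : Set Θ) :
    rpostMeasure lam prior f α n x A = rpostIID lam prior f α n A x := by
  rw [rpostMeasure, Measure.smul_apply, smul_eq_mul, withDensity_apply', rpostIID,
    div_eq_mul_inv, mul_comm]

end Posterior

lemma ae_eventually_lt_of_measure_limsup_eq_zero {Ω : Type*} [MeasurableSpace Ω]
    {P : Measure Ω} {Z : ℕ → Ω → ℝ≥0∞} {r : ℝ} (hr : 0 < r)
    (h : P (limsup (fun n : ℕ => {ω | ENNReal.ofReal (Real.exp (-((n : ℝ) * r))) ≤ Z n ω})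
      atTop) = 0) {ε : ℝ≥0∞} (hε : 0 < ε) :
    ∀ᵐ ω ∂P, ∀ᶠ n in atTop, Z n ω < ε := by
  have hexp : Tendsto (fun n : ℕ => ENNReal.ofReal (Real.exp (-((n : ℝ) * r)))) atTop (𝓝 0) := by
    rw [← ENNReal.ofReal_zero]
    exact ENNReal.tendsto_ofReal <| Real.tendsto_exp_atBot.comp <| tendsto_neg_atTop_atBot.comp <|
      tendsto_natCast_atTop_atTop.atTop_mul_const hr
  filter_upwards [measure_eq_zero_iff_ae_notMem.1 h] with ω hω
  have hlt : ∀ᶠ n in atTop, Z n ω < ENNReal.ofReal (Real.exp (-((n : ℝ) * r))) := by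
    simpa only [Set.mem_ofPred_eq, not_le, not_frequently] using
      mt mem_limsup_iff_frequently_mem.2 hω
  filter_upwards [hlt, hexp.eventually_lt_const hε] with n h₁ h₂ using h₁.trans h₂

lemma tendsto_zero_of_forall_eventually_le {u b : ℕ → ℝ} (hu : ∀ n, 0 ≤ u n)
    (hb : Tendsto b atTop (𝓝 0)) (h : ∀ k, ∀ᶠ n in atTop, u n ≤ b k) :
    Tendsto u atTop (𝓝 0) := by
  refine tendsto_order.2 ⟨fun a ha => Eventually.of_forall fun n => ha.trans_le (hu n), ?_⟩
  intro a ha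
  obtain ⟨k, hk⟩ := (hb.eventually_lt_const ha).exists
  exact (h k).mono fun n hn => hn.trans_lt hk

theorem stmt_11_general
    {Ω χ Θ : Type*} [MeasurableSpace Ω] [MeasurableSpace χ] [MeasurableSpace Θ]
    (P : Measure Ω)
    (lam : Measure χ)
    (α : ℝ)
    -- the true density g and the IID data X₁, X₂, …
    (g : χ → ℝ) (hg : IsDens lam g)
    (X : ℕ → Ω → χ)
    -- the model family {f_θ}
    (f : Θ → χ → ℝ)
    (hf : ∀ θ, IsDens lam (f θ))
    -- the prior
    (prior : Measure Θ) (hprior : prior Set.univ ≤ 1)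
    (hpostwd : ∀ n (x : Fin n → χ),
      0 < ∫⁻ θ, ENNReal.ofReal (Real.exp (qlik lam f α n x θ)) ∂prior ∧
      (∫⁻ θ, ENNReal.ofReal (Real.exp (qlik lam f α n x θ)) ∂prior) < ⊤)
    -- exponential posterior concentration on L₁ neighbourhoods of g
    (hconc : ∀ ε : ℝ, 0 < ε → ∃ r : ℝ, 0 < r ∧
      P (Filter.limsup (fun n : ℕ => {ω |
        ENNReal.ofReal (Real.exp (-((n : ℝ) * r)))
          ≤ rpostIID lam prior f α n {θ | ε < dOne lam g (f θ)}
              (fun i : Fin n => X i.1 ω)}) atTop) = 0)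
    -- the loss: either the L₁ loss or the squared Hellinger loss
    (L : (χ → ℝ) → (χ → ℝ) → ℝ)
    (hL : L = (fun p₁ p₂ => dOne lam p₁ p₂) ∨ L = (fun p₁ p₂ => dHell lam p₁ p₂))
    -- an approximate R^(α)-Bayes predictive density estimator with respect to L
    (ghat : ∀ n : ℕ, (Fin n → χ) → χ → ℝ) (hghatdens : ∀ n x, IsDens lam (ghat n x))
    (δ : ℕ → ℝ) (hδ : Tendsto δ atTop (nhds 0))
    (happrox : ∀ n (x : Fin n → χ),
      (∫⁻ θ, ENNReal.ofReal (L (f θ) (ghat n x)) ∂(rpostMeasure lam prior f α n x))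
        < (⨅ (g' : χ → ℝ) (_ : IsDens lam g'),
            ∫⁻ θ, ENNReal.ofReal (L (f θ) g') ∂(rpostMeasure lam prior f α n x))
          + ENNReal.ofReal (δ n)) :
    ∀ᵐ ω ∂P, Tendsto (fun n : ℕ =>
      dOne lam g (ghat n (fun i : Fin n => X i.1 ω))) atTop (nhds 0) := by
  have : IsFiniteMeasure prior := ⟨hprior.trans_lt ENNReal.one_lt_top⟩
  have hloss : (∀ p q, IsDens lam p → IsDens lam q → L p q ≤ dOne lam p q) ∧
      ∀ p q, IsDens lam p → IsDens lam q → ∀ s, 0 < s → dOne lam p q ≤ L p q / s + s := by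
    rcases hL with rfl | rfl
    · exact ⟨fun _ _ _ _ => le_rfl, fun _ _ hp hq _ hs => dOne_le_dOne_div_add hp hq hs⟩
    · exact ⟨fun _ _ hp hq => dHell_le_dOne hp hq, fun _ _ hp hq _ hs =>
        dOne_le_dHell_div_add hp hq hs⟩
  have hbound : ∀ ε : ℝ, 0 < ε → ∀ᵐ ω ∂P, ∀ᶠ n in atTop,
      dOne lam g (ghat n (fun i : Fin n => X i.1 ω)) ≤ 3 * ε + 5 * √ε := by
    intro ε hε
    obtain ⟨r, hr, hP⟩ := hconc ε hε
    filter_upwards [ae_eventually_lt_of_measure_limsup_eq_zero hr hP (ENNReal.ofReal_pos.2 hε)]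
      with ω hω
    filter_upwards [hω, hδ.eventually_le_const hε] with n hn hδn
    set x : Fin n → χ := fun i => X i.1 ω
    have := isProbabilityMeasure_rpostMeasure (hpostwd n x).1 (hpostwd n x).2
    exact dOne_le_of_lintegral_lt_iInf_add hloss.1 hloss.2 hf hg (hghatdens n x) hε hδn
      ((rpostMeasure_apply _).trans_le hn.le) (happrox n x)
  have hb : Tendsto (fun k : ℕ => 3 * (1 / ((k : ℝ) + 1)) + 5 * √(1 / ((k : ℝ) + 1))) atTop
      (𝓝 0) := by
    have h : Tendsto (fun k : ℕ => 1 / ((k : ℝ) + 1)) atTop (𝓝 0) :=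
      tendsto_one_div_add_atTop_nhds_zero_nat
    have h' := (h.const_mul 3).add (((Real.continuous_sqrt.tendsto 0).comp h).const_mul 5)
    rwa [Real.sqrt_zero, mul_zero, mul_zero, add_zero] at h'
  filter_upwards [ae_all_iff.2 fun k : ℕ => hbound (1 / ((k : ℝ) + 1)) (by positivity)]
    with ω hω
  exact tendsto_zero_of_forall_eventually_le (fun _ => dOne_nonneg _ _) hb hω

/-- (Proposition 5 / Corollary: the approximate `R^(α)`-Bayes predictive
density estimators under the L₁ and squared Hellinger losses are L₁-consistent with
probability one, given exponential posterior concentration on L₁-neighbourhoods). -/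
theorem stmt_11
    {Ω χ Θ : Type*} [MeasurableSpace Ω] [MeasurableSpace χ] [MeasurableSpace Θ]
    (P : Measure Ω) [IsProbabilityMeasure P]
    (lam : Measure χ) [SigmaFinite lam]
    (α : ℝ) (hα : 0 < α)
    -- the true density g and the IID data X₁, X₂, …
    (g : χ → ℝ) (hg : IsDens lam g)
    (X : ℕ → Ω → χ) (hXmeas : ∀ i, Measurable (X i))
    (hindep : ProbabilityTheory.iIndepFun X P)
    (hlaw : ∀ i, P.map (X i) = lam.withDensity (fun y => ENNReal.ofReal (g y)))
    -- the model family {f_θ}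
    (f : Θ → χ → ℝ) (hfmeas : Measurable (fun z : Θ × χ => f z.1 z.2))
    (hf : ∀ θ, IsDens lam (f θ))
    -- the prior
    (prior : Measure Θ) (hprior : prior Set.univ ≤ 1)
    (hpostwd : ∀ n (x : Fin n → χ),
      0 < ∫⁻ θ, ENNReal.ofReal (Real.exp (qlik lam f α n x θ)) ∂prior ∧
      (∫⁻ θ, ENNReal.ofReal (Real.exp (qlik lam f α n x θ)) ∂prior) < ⊤)
    -- exponential posterior concentration on L₁ neighbourhoods of g
    (hconc : ∀ ε : ℝ, 0 < ε → ∃ r : ℝ, 0 < r ∧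
      P (Filter.limsup (fun n : ℕ => {ω |
        ENNReal.ofReal (Real.exp (-((n : ℝ) * r)))
          ≤ rpostIID lam prior f α n {θ | ε < dOne lam g (f θ)}
              (fun i : Fin n => X i.1 ω)}) atTop) = 0)
    -- the loss: either the L₁ loss or the squared Hellinger loss
    (L : (χ → ℝ) → (χ → ℝ) → ℝ)
    (hL : L = (fun p₁ p₂ => dOne lam p₁ p₂) ∨ L = (fun p₁ p₂ => dHell lam p₁ p₂))
    -- an approximate R^(α)-Bayes predictive density estimator with respect to L
    (ghat : ∀ n : ℕ, (Fin n → χ) → χ → ℝ) (hghatdens : ∀ n x, IsDens lam (ghat n x))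
    (δ : ℕ → ℝ) (hδ : Tendsto δ atTop (nhds 0))
    (happrox : ∀ n (x : Fin n → χ),
      (∫⁻ θ, ENNReal.ofReal (L (f θ) (ghat n x)) ∂(rpostMeasure lam prior f α n x))
        < (⨅ (g' : χ → ℝ) (_ : IsDens lam g'),
            ∫⁻ θ, ENNReal.ofReal (L (f θ) g') ∂(rpostMeasure lam prior f α n x))
          + ENNReal.ofReal (δ n)) :
    ∀ᵐ ω ∂P, Tendsto (fun n : ℕ =>
      dOne lam g (ghat n (fun i : Fin n => X i.1 ω))) atTop (nhds 0) :=
  stmt_11_general P lam α g hg X f hf prior hprior hpostwd hconc L hL ghat hghatdens δ hδ happrox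
end
end

section
/- Let π̃ be a finite measure on a measurable space (Θ, B_Θ), let μ_n be measures on Θ absolutely continuous with respect to π̃, and let D_n : Θ → [0,∞] be measurable functions. Fix r > 0 and suppose liminf_{n→∞} e^{nr} (dμ_n/dπ̃)(θ) ≥ 1 for every θ ∈ Θ. Then for every ε > 0, liminf_{n→∞} e^{nr} μ_n({θ : D_n(θ) < ε}) ≥ π̃({θ : limsup_{n→∞} D_n(θ) < ε}). -/
open MeasureTheory ENNReal Filter

/-!
Apply Fatou's lemma to `1_{D_n < ε} · e^{nr} dμ_n/dπ̃`. Where `limsup D_n < ε`, the indicator is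
eventually `1`, so the liminf of these densities is at least `1` there; and the integral of the
`n`-th density is at most `e^{nr} μ_n {D_n < ε}`, the singular part of `μ_n` only adding mass.
-/

lemma Filter.setOf_limsup_lt_subset_liminf {ι α β : Type*} [CompleteLinearOrder β] {l : Filter ι}
    (f : ι → α → β) (b : β) :
    {x | limsup (fun i => f i x) l < b} ⊆ liminf (fun i => {x | f i x < b}) l :=
  fun _ hx => mem_liminf_iff_eventually_mem.2 (eventually_lt_of_limsup_lt hx)

namespace MeasureTheory.Measure

variable {α : Type*} [MeasurableSpace α]

lemma lintegral_indicator_const_mul_rnDeriv_le (μ ν : Measure α) (c : ℝ≥0∞) {s : Set α}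
    (hs : MeasurableSet s) :
    ∫⁻ x, s.indicator (fun x => c * μ.rnDeriv ν x) x ∂ν ≤ c * μ s := by
  rw [lintegral_indicator hs, lintegral_const_mul _ (μ.measurable_rnDeriv ν)]
  exact mul_le_mul_right (setLIntegral_rnDeriv_le s) c

theorem measure_liminf_le_liminf_mul_measure {ν : Measure α} {μ : ℕ → Measure α}
    {c : ℕ → ℝ≥0∞} {s : ℕ → Set α} (hs : ∀ n, MeasurableSet (s n))
    (h : ∀ᵐ x ∂ν, 1 ≤ liminf (fun n => c n * (μ n).rnDeriv ν x) atTop) :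
    ν (liminf s atTop) ≤ liminf (fun n => c n * μ n (s n)) atTop := by
  set g : ℕ → α → ℝ≥0∞ := fun n => (s n).indicator fun x => c n * (μ n).rnDeriv ν x
  have hg : ∀ n, Measurable (g n) := fun n =>
    (measurable_const.mul ((μ n).measurable_rnDeriv ν)).indicator (hs n)
  have one_le_liminf_g : ∀ᵐ x ∂ν, x ∈ liminf s atTop → 1 ≤ liminf (fun n => g n x) atTop := by
    filter_upwards [h] with x hx hxs
    refine hx.trans_eq (liminf_congr ?_)
    filter_upwards [mem_liminf_iff_eventually_mem.1 hxs] with n hn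
    exact (Set.indicator_of_mem hn fun x => c n * (μ n).rnDeriv ν x).symm
  calc ν (liminf s atTop) = ∫⁻ _ in liminf s atTop, (1 : ℝ≥0∞) ∂ν := (setLIntegral_one _).symm
    _ ≤ ∫⁻ x in liminf s atTop, liminf (fun n => g n x) atTop ∂ν :=
      setLIntegral_mono_ae' (.measurableSet_liminf hs) one_le_liminf_g
    _ ≤ ∫⁻ x, liminf (fun n => g n x) atTop ∂ν := setLIntegral_le_lintegral _ _
    _ ≤ liminf (fun n => ∫⁻ x, g n x ∂ν) atTop := lintegral_liminf_le hg
    _ ≤ liminf (fun n => c n * μ n (s n)) atTop := liminf_le_liminf <| .of_forall fun n =>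
      lintegral_indicator_const_mul_rnDeriv_le (μ n) ν (c n) (hs n)

end MeasureTheory.Measure

theorem stmt_16_general
    {Θ : Type*} [MeasurableSpace Θ]
    (πt : Measure Θ)
    (μ : ℕ → Measure Θ)
    (D : ℕ → Θ → ℝ≥0∞) (hD : ∀ n, Measurable (D n))
    (r : ℝ)
    (h : ∀ θ, 1 ≤ Filter.liminf (fun n : ℕ =>
      ENNReal.ofReal (Real.exp ((n : ℝ) * r)) * (μ n).rnDeriv πt θ) atTop) :
    ∀ ε : ℝ≥0∞, 0 < ε →
      πt {θ | Filter.limsup (fun n => D n θ) atTop < ε}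
        ≤ Filter.liminf (fun n : ℕ =>
            ENNReal.ofReal (Real.exp ((n : ℝ) * r)) * μ n {θ | D n θ < ε}) atTop := by
  intro ε _
  calc πt {θ | limsup (fun n => D n θ) atTop < ε}
      ≤ πt (liminf (fun n => {θ | D n θ < ε}) atTop) :=
        measure_mono (setOf_limsup_lt_subset_liminf D ε)
    _ ≤ _ := Measure.measure_liminf_le_liminf_mul_measure
        (fun n => measurableSet_lt (hD n) measurable_const) (ae_of_all _ h)

/-- Fatou-type step in the verification of Assumption (M1) from
information denseness of a prior sequence. -/
theorem stmt_16
    {Θ : Type*} [MeasurableSpace Θ]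
    (πt : Measure Θ) [IsFiniteMeasure πt]
    (μ : ℕ → Measure Θ) (hac : ∀ n, μ n ≪ πt)
    (D : ℕ → Θ → ℝ≥0∞) (hD : ∀ n, Measurable (D n))
    (r : ℝ) (hr : 0 < r)
    (h : ∀ θ, 1 ≤ Filter.liminf (fun n : ℕ =>
      ENNReal.ofReal (Real.exp ((n : ℝ) * r)) * (μ n).rnDeriv πt θ) atTop) :
    ∀ ε : ℝ≥0∞, 0 < ε →
      πt {θ | Filter.limsup (fun n => D n θ) atTop < ε}
        ≤ Filter.liminf (fun n : ℕ =>
            ENNReal.ofReal (Real.exp ((n : ℝ) * r)) * μ n {θ | D n θ < ε}) atTop :=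
  stmt_16_general πt μ D hD r h
end

section
/- Let p and q be probability densities with respect to a σ-finite measure λ on a measurable space. Then ∫ p |log(p/q)| dλ ≤ ∫ p log(p/q) dλ + 2/e, i.e., the expected absolute log-likelihood ratio under p is bounded by the Kullback–Leibler divergence KL(p, q) plus 2/e. -/
/-!
Since `|f| = f + 2 f⁻`, it suffices to bound the negative part of `f = p log (p / q)`
pointwise: where `p < q` it equals `p log (q / p) ≤ p · (q / p) / e = q / e`
by `log y ≤ y / e`, and `∫ q / e = 1 / e`.
-/

open MeasureTheory

namespace Real

lemma log_le_div_exp_one {x : ℝ} (hx : 0 < x) : log x ≤ x / exp 1 := by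
  rw [le_div_iff₀' (exp_pos 1)]
  simpa [exp_log hx] using exp_one_mul_le_exp (x := log x)

lemma negPart_mul_log_div_le {a b : ℝ} (ha : 0 ≤ a) (hb : 0 ≤ b) :
    (a * log (a / b))⁻ ≤ b / exp 1 := by
  have hbe : 0 ≤ b / exp 1 := by positivity
  rw [negPart_def, max_le_iff]
  refine ⟨?_, hbe⟩
  rcases ha.eq_or_lt with rfl | ha
  · simpa using hbe
  rcases hb.eq_or_lt with rfl | hb
  · simp
  calc -(a * log (a / b)) = a * log (b / a) := by rw [← mul_neg, ← log_inv, inv_div]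
    _ ≤ a * (b / a / exp 1) := by gcongr; exact log_le_div_exp_one (by positivity)
    _ = b / exp 1 := by field_simp

end Real

theorem MeasureTheory.integral_abs_le_integral_add_two_mul_of_negPart_le {α : Type*}
    [MeasurableSpace α] {μ : Measure α} {f g : α → ℝ} (hf : AEStronglyMeasurable f μ)
    (hg : Integrable g μ) (hfg : ∀ᵐ x ∂μ, (f x)⁻ ≤ g x) :
    ∫ x, |f x| ∂μ ≤ ∫ x, f x ∂μ + 2 * ∫ x, g x ∂μ := by
  by_cases hfi : Integrable f μ
  · rw [integral_abs_eq_two_mul_integral_negPart_add_integral hfi]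
    have hneg : ∫ x, (f x)⁻ ∂μ ≤ ∫ x, g x ∂μ :=
      integral_mono_ae (by simpa only [negPart_def] using hfi.neg_part) hg hfg
    linarith
  · have hg0 : 0 ≤ ∫ x, g x ∂μ :=
      integral_nonneg_of_ae (hfg.mono fun x hx => (negPart_nonneg _).trans hx)
    have habs : ¬ Integrable (fun x => |f x|) μ := fun h => hfi ((integrable_norm_iff hf).1 h)
    rw [integral_undef hfi, integral_undef habs]
    linarith

theorem stmt_17_general
    {χ : Type*} [MeasurableSpace χ] (lam : Measure χ)
    (p q : χ → ℝ) (hp0 : ∀ x, 0 ≤ p x) (hq0 : ∀ x, 0 ≤ q x)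
    (hp1 : ∫ x, p x ∂lam = 1) (hq1 : ∫ x, q x ∂lam = 1) :
    ∫ x, p x * |Real.log (p x / q x)| ∂lam
      ≤ (∫ x, p x * Real.log (p x / q x) ∂lam) + 2 / Real.exp 1 := by
  have hp : Integrable p lam := Integrable.of_integral_ne_zero (by simp [hp1])
  have hq : Integrable q lam := Integrable.of_integral_ne_zero (by simp [hq1])
  have hf : AEStronglyMeasurable (fun x => p x * Real.log (p x / q x)) lam := by
    have := hp.aemeasurable
    have := hq.aemeasurable
    fun_prop
  calc ∫ x, p x * |Real.log (p x / q x)| ∂lam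
      = ∫ x, |p x * Real.log (p x / q x)| ∂lam := by simp_rw [abs_mul, abs_of_nonneg (hp0 _)]
    _ ≤ (∫ x, p x * Real.log (p x / q x) ∂lam) + 2 * ∫ x, q x / Real.exp 1 ∂lam :=
      integral_abs_le_integral_add_two_mul_of_negPart_le hf (hq.div_const _)
        (ae_of_all _ fun x => Real.negPart_mul_log_div_le (hp0 x) (hq0 x))
    _ = (∫ x, p x * Real.log (p x / q x) ∂lam) + 2 / Real.exp 1 := by
      rw [integral_div, hq1, mul_one_div]

/-- the expected absolute log-likelihood ratio under `p` is bounded by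
the Kullback–Leibler divergence `KL(p, q)` plus `2/e`. -/
theorem stmt_17
    {χ : Type*} [MeasurableSpace χ] (lam : Measure χ) [SigmaFinite lam]
    (p q : χ → ℝ) (hp0 : ∀ x, 0 ≤ p x) (hq0 : ∀ x, 0 ≤ q x)
    (hpm : Measurable p) (hqm : Measurable q)
    (hp1 : ∫ x, p x ∂lam = 1) (hq1 : ∫ x, q x ∂lam = 1) :
    ∫ x, p x * |Real.log (p x / q x)| ∂lam
      ≤ (∫ x, p x * Real.log (p x / q x) ∂lam) + 2 / Real.exp 1 :=
  stmt_17_general lam p q hp0 hq0 hp1 hq1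
end

section
/- Let p and q be probability densities with respect to a σ-finite measure λ on a measurable space (χ, B), and let X_1, …, X_n be i.i.d. random variables with density p (law P for each coordinate). Then P( Π_{i=1}^n q(X_i) > Π_{i=1}^n p(X_i) ) ≤ ( ∫ √(p q) dλ )^n. In particular, if d_H(p, q) = ∫ (√p − √q)² dλ denotes the squared Hellinger distance, this probability is at most (1 − d_H(p, q)/2)^n. -/
/-!
Almost surely every `p (X i)` is positive, and there the event `∏ p (X i) < ∏ q (X i)`
forces the square-rooted likelihood ratio `∏ √(q (X i) / p (X i))` to be at least `1`.
Markov's inequality bounds the probability by its expectation, which factorizes by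
independence; each factor is `∫ p √(q / p) dλ = ∫ √(p q) dλ`. Expanding the square gives
`∫ (√p - √q)² dλ = 2 - 2 ∫ √(p q) dλ` for probability densities.
-/

open MeasureTheory ENNReal ProbabilityTheory

lemma Real.mul_sqrt_div_eq_sqrt_mul {a : ℝ} (ha : 0 ≤ a) (b : ℝ) :
    a * √(b / a) = √(a * b) := by
  rcases ha.eq_or_lt with rfl | ha
  · simp
  · rw [← Real.sqrt_sq ha.le, ← Real.sqrt_mul (sq_nonneg a), Real.sqrt_sq ha.le]
    congr 1
    field_simp

lemma Real.sqrt_mul_le_add_div_two {a b : ℝ} (ha : 0 ≤ a) (hb : 0 ≤ b) :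
    √(a * b) ≤ (a + b) / 2 := by
  rw [Real.sqrt_mul ha]
  nlinarith [sq_nonneg (√a - √b), Real.sq_sqrt ha, Real.sq_sqrt hb]

lemma Real.sq_sqrt_sub_sqrt {a b : ℝ} (ha : 0 ≤ a) (hb : 0 ≤ b) :
    (√a - √b) ^ 2 = a + b - 2 * √(a * b) := by
  rw [Real.sqrt_mul ha]
  nlinarith [Real.sq_sqrt ha, Real.sq_sqrt hb]

lemma one_le_prod_sqrt_div_of_prod_lt_prod {ι : Type*} {s : Finset ι} {a b : ι → ℝ}
    (ha : ∀ i ∈ s, 0 < a i) (hb : ∀ i ∈ s, 0 ≤ b i) (h : ∏ i ∈ s, a i < ∏ i ∈ s, b i) :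
    1 ≤ ∏ i ∈ s, √(b i / a i) := by
  rw [← Real.sqrt_prod s fun i hi => div_nonneg (hb i hi) (ha i hi).le,
    Finset.prod_div_distrib, Real.one_le_sqrt, one_le_div (Finset.prod_pos ha)]
  exact h.le

section Hellinger

variable {χ : Type*} [MeasurableSpace χ] {lam : Measure χ} {p q : χ → ℝ}

lemma integrable_sqrt_mul (hp0 : ∀ y, 0 ≤ p y) (hq0 : ∀ y, 0 ≤ q y)
    (hpm : Measurable p) (hqm : Measurable q) (hp : Integrable p lam) (hq : Integrable q lam) :
    Integrable (fun y => √(p y * q y)) lam := by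
  refine ((hp.add hq).div_const 2).mono (hpm.mul hqm).sqrt.aestronglyMeasurable
    (ae_of_all _ fun y => ?_)
  rw [Pi.add_apply, Real.norm_of_nonneg (Real.sqrt_nonneg _),
    Real.norm_of_nonneg (div_nonneg (add_nonneg (hp0 y) (hq0 y)) zero_le_two)]
  exact Real.sqrt_mul_le_add_div_two (hp0 y) (hq0 y)

lemma integral_sq_sqrt_sub_sqrt (hp0 : ∀ y, 0 ≤ p y) (hq0 : ∀ y, 0 ≤ q y)
    (hpm : Measurable p) (hqm : Measurable q) (hp : Integrable p lam) (hq : Integrable q lam) :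
    ∫ y, (√(p y) - √(q y)) ^ 2 ∂lam
      = ∫ y, p y ∂lam + ∫ y, q y ∂lam - 2 * ∫ y, √(p y * q y) ∂lam := by
  simp_rw [Real.sq_sqrt_sub_sqrt (hp0 _) (hq0 _)]
  rw [integral_sub (f := fun y => p y + q y) (hp.add hq)
      ((integrable_sqrt_mul hp0 hq0 hpm hqm hp hq).const_mul 2),
    integral_add hp hq, integral_const_mul]

end Hellinger

section LikelihoodRatio

variable {Ω χ : Type*} [MeasurableSpace Ω] [MeasurableSpace χ] {P : Measure Ω}
  {lam : Measure χ} {p q : χ → ℝ} {X : Ω → χ}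

lemma ae_density_comp_pos (hpm : Measurable p) (hX : AEMeasurable X P)
    (hlaw : P.map X = lam.withDensity fun y => ENNReal.ofReal (p y)) :
    ∀ᵐ ω ∂P, 0 < p (X ω) := by
  refine ae_of_ae_map (p := fun y => 0 < p y) hX ?_
  rw [hlaw, ae_withDensity_iff hpm.ennreal_ofReal]
  exact ae_of_all _ fun y hy => ENNReal.ofReal_pos.1 (pos_iff_ne_zero.2 hy)

lemma lintegral_sqrt_div_comp (hp0 : ∀ y, 0 ≤ p y) (hpm : Measurable p) (hqm : Measurable q)
    (hX : Measurable X) (hlaw : P.map X = lam.withDensity fun y => ENNReal.ofReal (p y)) :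
    ∫⁻ ω, ENNReal.ofReal √(q (X ω) / p (X ω)) ∂P
      = ∫⁻ y, ENNReal.ofReal √(p y * q y) ∂lam := by
  have hfm : Measurable fun y => ENNReal.ofReal √(q y / p y) :=
    (hqm.div hpm).sqrt.ennreal_ofReal
  rw [← lintegral_map hfm hX, hlaw,
    lintegral_withDensity_eq_lintegral_mul _ hpm.ennreal_ofReal hfm]
  congr 1 with y
  rw [Pi.mul_apply, ← ENNReal.ofReal_mul (hp0 y), Real.mul_sqrt_div_eq_sqrt_mul (hp0 y)]

end LikelihoodRatio

section LikelihoodRatioTest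

variable {Ω χ ι : Type*} [MeasurableSpace Ω] [MeasurableSpace χ] [Fintype ι] {P : Measure Ω}
  {lam : Measure χ} {p q : χ → ℝ} {X : ι → Ω → χ}

theorem measure_prod_lt_prod_le_lintegral_sqrt_mul_pow (hp0 : ∀ y, 0 ≤ p y)
    (hq0 : ∀ y, 0 ≤ q y) (hpm : Measurable p) (hqm : Measurable q) (hXm : ∀ i, Measurable (X i))
    (hindep : iIndepFun X P)
    (hlaw : ∀ i, P.map (X i) = lam.withDensity fun y => ENNReal.ofReal (p y)) :
    P {ω | ∏ i, p (X i ω) < ∏ i, q (X i ω)}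
      ≤ (∫⁻ y, ENNReal.ofReal √(p y * q y) ∂lam) ^ Fintype.card ι := by
  set ratio : ι → Ω → ℝ≥0∞ := fun i ω => ENNReal.ofReal √(q (X i ω) / p (X i ω))
  have hratio_meas : ∀ i, Measurable (ratio i) := fun i =>
    ((hqm.comp (hXm i)).div (hpm.comp (hXm i))).sqrt.ennreal_ofReal
  have hevent : ∀ᵐ ω ∂P, ω ∈ {ω | ∏ i, p (X i ω) < ∏ i, q (X i ω)} →
      ω ∈ {ω | 1 ≤ ∏ i, ratio i ω} := by
    filter_upwards [ae_all_iff.2 fun i => ae_density_comp_pos hpm (hXm i).aemeasurable (hlaw i)]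
      with ω hpos hlt
    rw [← ENNReal.ofReal_prod_of_nonneg fun i _ => Real.sqrt_nonneg _,
      ← ENNReal.ofReal_one]
    exact ENNReal.ofReal_le_ofReal
      (one_le_prod_sqrt_div_of_prod_lt_prod (fun i _ => hpos i) (fun i _ => hq0 _) hlt)
  calc P {ω | ∏ i, p (X i ω) < ∏ i, q (X i ω)}
      ≤ P {ω | 1 ≤ ∏ i, ratio i ω} := measure_mono_ae hevent
    _ ≤ ∫⁻ ω, ∏ i, ratio i ω ∂P := by
      simpa using mul_meas_ge_le_lintegral₀
        (Finset.measurable_prod _ fun i _ => hratio_meas i).aemeasurable 1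
    _ = ∏ i, ∫⁻ ω, ratio i ω ∂P :=
      lintegral_prod_eq_prod_lintegral_of_indepFun _ _
        (hindep.comp _ fun _ => (hqm.div hpm).sqrt.ennreal_ofReal) hratio_meas
    _ = (∫⁻ y, ENNReal.ofReal √(p y * q y) ∂lam) ^ Fintype.card ι := by
      simp only [ratio, lintegral_sqrt_div_comp hp0 hpm hqm (hXm _) (hlaw _), Finset.prod_const,
        Finset.card_univ]

end LikelihoodRatioTest

theorem stmt_18_general
    {Ω χ : Type*} [MeasurableSpace Ω] [MeasurableSpace χ]
    (P : Measure Ω)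
    (lam : Measure χ)
    (p q : χ → ℝ) (hp0 : ∀ y, 0 ≤ p y) (hq0 : ∀ y, 0 ≤ q y)
    (hpm : Measurable p) (hqm : Measurable q)
    (hp1 : ∫ y, p y ∂lam = 1) (hq1 : ∫ y, q y ∂lam = 1)
    (n : ℕ) (X : Fin n → Ω → χ) (hXm : ∀ i, Measurable (X i))
    (hindep : ProbabilityTheory.iIndepFun X P)
    (hlaw : ∀ i, P.map (X i) = lam.withDensity (fun y => ENNReal.ofReal (p y))) :
    P {ω | ∏ i, p (X i ω) < ∏ i, q (X i ω)}
      ≤ ENNReal.ofReal ((∫ y, Real.sqrt (p y * q y) ∂lam) ^ n)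
    ∧ P {ω | ∏ i, p (X i ω) < ∏ i, q (X i ω)}
      ≤ ENNReal.ofReal
          ((1 - (∫ y, (Real.sqrt (p y) - Real.sqrt (q y)) ^ 2 ∂lam) / 2) ^ n) := by
  have hp : Integrable p lam := Integrable.of_integral_ne_zero (by simp [hp1])
  have hq : Integrable q lam := Integrable.of_integral_ne_zero (by simp [hq1])
  have haffinity : P {ω | ∏ i, p (X i ω) < ∏ i, q (X i ω)}
      ≤ ENNReal.ofReal ((∫ y, √(p y * q y) ∂lam) ^ n) := by
    rw [ENNReal.ofReal_pow (integral_nonneg fun _ => Real.sqrt_nonneg _),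
      ofReal_integral_eq_lintegral_ofReal (integrable_sqrt_mul hp0 hq0 hpm hqm hp hq)
        (ae_of_all _ fun _ => Real.sqrt_nonneg _)]
    simpa only [Fintype.card_fin] using
      measure_prod_lt_prod_le_lintegral_sqrt_mul_pow hp0 hq0 hpm hqm hXm hindep hlaw
  refine ⟨haffinity, ?_⟩
  rwa [integral_sq_sqrt_sub_sqrt hp0 hq0 hpm hqm hp hq, hp1, hq1,
    show ∀ A : ℝ, 1 - (1 + 1 - 2 * A) / 2 = A from fun A => by ring]

/-- testing estimate: the probability that the likelihood ratio exceeds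
one is bounded by the `n`-th power of the Hellinger affinity. -/
theorem stmt_18
    {Ω χ : Type*} [MeasurableSpace Ω] [MeasurableSpace χ]
    (P : Measure Ω) [IsProbabilityMeasure P]
    (lam : Measure χ) [SigmaFinite lam]
    (p q : χ → ℝ) (hp0 : ∀ y, 0 ≤ p y) (hq0 : ∀ y, 0 ≤ q y)
    (hpm : Measurable p) (hqm : Measurable q)
    (hp1 : ∫ y, p y ∂lam = 1) (hq1 : ∫ y, q y ∂lam = 1)
    (n : ℕ) (X : Fin n → Ω → χ) (hXm : ∀ i, Measurable (X i))
    (hindep : ProbabilityTheory.iIndepFun X P)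
    (hlaw : ∀ i, P.map (X i) = lam.withDensity (fun y => ENNReal.ofReal (p y))) :
    P {ω | ∏ i, p (X i ω) < ∏ i, q (X i ω)}
      ≤ ENNReal.ofReal ((∫ y, Real.sqrt (p y * q y) ∂lam) ^ n)
    ∧ P {ω | ∏ i, p (X i ω) < ∏ i, q (X i ω)}
      ≤ ENNReal.ofReal
          ((1 - (∫ y, (Real.sqrt (p y) - Real.sqrt (q y)) ^ 2 ∂lam) / 2) ^ n) :=
  stmt_18_general P lam p q hp0 hq0 hpm hqm hp1 hq1 n X hXm hindep hlaw
end
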